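/- arXiv:1203.1126 — 12 statements merged into one kernel-verified Lean document; each statement's English description precedes it below -/
import Mathlib

section
/- For every 2-bounded coloring χ of the 2-element subsets of ℕ (with values in an arbitrary set of colors C) there exists an infinite set Y ⊆ ℕ that is polychromatic for χ. -/
/-- `Y` is polychromatic for the coloring `χ`, given as a function on ordered pairs `a < b`:
distinct pairs from `Y` receive distinct colors. -/
def Polychromatic {C : Type*} (χ : ℕ → ℕ → C) (Y : Set ℕ) : Prop :=
  ∀ a b c d : ℕ, a ∈ Y → b ∈ Y → c ∈ Y → d ∈ Y → a < b → c < d →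
    χ a b = χ c d → a = c ∧ b = d

/-- `χ` is 2-bounded: every color is received by at most two pairs. -/
def TwoBounded {C : Type*} (χ : ℕ → ℕ → C) : Prop :=
  ∀ c : C, {p : ℕ × ℕ | p.1 < p.2 ∧ χ p.1 p.2 = c}.encard ≤ 2

/-!
Build the polychromatic set one element at a time, keeping an infinite reservoir of candidates.
Collisions between a new pair `(x, y)` and a pair of the finite stem, or a pair `(a, x)` with `a`
in the stem, involve only finitely many colors and are excluded by avoiding finitely many `x`.
The remaining danger is `χ a y = χ x y` for `a` in the stem and infinitely many later `y`. By
2-boundedness, for fixed `a` and `y` at most one `x ≠ a` satisfies it, so among `|stem| + 1`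
candidates `x` some `x` fails it for infinitely many `y` (pigeonhole), and these `y` form the next
reservoir.
-/

section

variable {C : Type*} {χ : ℕ → ℕ → C}

namespace Polychromatic

theorem iUnion {Y : ℕ → Set ℕ} (hmono : Monotone Y) (hY : ∀ n, Polychromatic χ (Y n)) :
    Polychromatic χ (⋃ n, Y n) := by
  intro a b c d ha hb hc hd hab hcd hcol
  obtain ⟨na, ha⟩ := Set.mem_iUnion.mp ha
  obtain ⟨nb, hb⟩ := Set.mem_iUnion.mp hb
  obtain ⟨nc, hc⟩ := Set.mem_iUnion.mp hc
  obtain ⟨nd, hd⟩ := Set.mem_iUnion.mp hd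
  let N := max (max na nb) (max nc nd)
  have mem {n u} (hn : n ≤ N) (hu : u ∈ Y n) : u ∈ Y N := hmono hn hu
  exact hY N a b c d (mem (by omega) ha) (mem (by omega) hb) (mem (by omega) hc)
    (mem (by omega) hd) hab hcd hcol

theorem insert_of_forall_lt {Y : Set ℕ} {x : ℕ} (hY : Polychromatic χ Y) (hlt : ∀ a ∈ Y, a < x)
    (hnew : ∀ a ∈ Y, ∀ b ∈ Y, ∀ c ∈ Y, b < c → χ a x ≠ χ b c)
    (hsep : ∀ a ∈ Y, ∀ b ∈ Y, a < b → χ a x ≠ χ b x) :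
    Polychromatic χ (insert x Y) := by
  have mem_of_lt {u v : ℕ} (hu : u ∈ insert x Y) (hv : v ∈ insert x Y) (huv : u < v) : u ∈ Y := by
    rcases hu with rfl | hu
    · rcases hv with rfl | hv
      · exact (lt_irrefl _ huv).elim
      · exact absurd huv (hlt v hv).not_gt
    · exact hu
  intro a b c d ha hb hc hd hab hcd hcol
  have haY := mem_of_lt ha hb hab
  have hcY := mem_of_lt hc hd hcd
  rcases hb with rfl | hbY <;> rcases hd with rfl | hdY
  · refine ⟨?_, rfl⟩
    rcases lt_trichotomy a c with h | h | h
    · exact absurd hcol (hsep a haY c hcY h)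
    · exact h
    · exact absurd hcol.symm (hsep c hcY a haY h)
  · exact absurd hcol (hnew a haY c hcY d hdY hcd)
  · exact absurd hcol.symm (hnew c hcY a haY b hbY hab)
  · exact hY a b c d haY hbY hcY hdY hab hcd hcol

end Polychromatic

namespace TwoBounded

theorem finite_setOf_color_mem (hχ : TwoBounded χ) {K : Set C} (hK : K.Finite) :
    {p : ℕ × ℕ | p.1 < p.2 ∧ χ p.1 p.2 ∈ K}.Finite := by
  have hclass (c : C) : {p : ℕ × ℕ | p.1 < p.2 ∧ χ p.1 p.2 = c}.Finite :=
    Set.encard_lt_top_iff.mp ((hχ c).trans_lt (by decide))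
  refine (hK.biUnion fun c _ => hclass c).subset ?_
  rintro p ⟨hp, hpK⟩
  exact Set.mem_biUnion hpK ⟨hp, rfl⟩

theorem eq_of_color_eq_color (hχ : TwoBounded χ) {a x x' y : ℕ} (hax : a ≠ x) (hax' : a ≠ x')
    (hay : a < y) (hxy : x < y) (hx'y : x' < y) (h : χ a y = χ x y) (h' : χ a y = χ x' y) :
    x = x' := by
  by_contra hxx'
  have hsub : ({(a, y), (x, y), (x', y)} : Set (ℕ × ℕ)) ⊆
      {p | p.1 < p.2 ∧ χ p.1 p.2 = χ a y} := by
    rintro p (rfl | rfl | rfl)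
    exacts [⟨hay, rfl⟩, ⟨hxy, h.symm⟩, ⟨hx'y, h'.symm⟩]
  have hthree : ({(a, y), (x, y), (x', y)} : Set (ℕ × ℕ)).encard = 3 := by
    rw [Set.encard_insert_of_notMem (by simp [hax, hax']), Set.encard_pair (by simp [hxx'])]
    rfl
  have := (Set.encard_le_encard hsub).trans (hχ (χ a y))
  rw [hthree] at this
  exact absurd this (by decide)

theorem exists_mem_setOf_color_ne_infinite (hχ : TwoBounded χ) {F : Finset ℕ} {A : Set ℕ}
    (hA : A.Infinite) (hFA : ∀ a ∈ F, ∀ y ∈ A, a < y) :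
    ∃ x ∈ A, {y | y ∈ A ∧ x < y ∧ ∀ a ∈ F, χ a y ≠ χ x y}.Infinite := by
  by_contra! hfin
  obtain ⟨X, hXA, hXcard⟩ := hA.exists_subset_card_eq (F.card + 1)
  have hXfin : (⋃ x ∈ (X : Set ℕ), {y | y ∈ A ∧ x < y ∧ ∀ a ∈ F, χ a y ≠ χ x y}).Finite :=
    X.finite_toSet.biUnion fun x hx => hfin x (hXA hx)
  obtain ⟨y, ⟨hyA, hyX⟩, hy⟩ := (hA.sdiff hXfin).exists_gt (X.sup id)
  have hxy {x} (hx : x ∈ X) : x < y := (Finset.le_sup (f := id) hx).trans_lt hy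
  have hcollide : ∀ x ∈ X, ∃ a ∈ F, χ a y = χ x y := by
    intro x hx
    by_contra! hne
    exact hyX (Set.mem_biUnion hx ⟨hyA, hxy hx, hne⟩)
  choose! f hfF hf using hcollide
  obtain ⟨x, hx, x', hx', hxx', hfx⟩ :=
    Finset.exists_ne_map_eq_of_card_lt_of_maps_to (by omega) hfF
  have hlt {x} (hx : x ∈ X) : f x < x := hFA _ (hfF x hx) x (hXA hx)
  refine hxx' (hχ.eq_of_color_eq_color (hlt hx).ne (hfx ▸ (hlt hx').ne)
    (hFA _ (hfF x hx) y hyA) (hxy hx) (hxy hx') (hf x hx) ?_)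
  rw [hfx]
  exact hf x' hx'

end TwoBounded

/-- `color_ne` rules out the only collisions with a future element `y` that cannot be avoided by
discarding finitely many candidates. -/
structure PolychromaticStage (χ : ℕ → ℕ → C) where
  stem : Finset ℕ
  reservoir : Set ℕ
  reservoir_infinite : reservoir.Infinite
  stem_lt : ∀ a ∈ stem, ∀ y ∈ reservoir, a < y
  color_ne : ∀ a ∈ stem, ∀ b ∈ stem, a < b → ∀ y ∈ reservoir, χ a y ≠ χ b y
  polychromatic : Polychromatic χ stem

namespace PolychromaticStage

def empty : PolychromaticStage χ where
  stem := ∅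
  reservoir := Set.univ
  reservoir_infinite := Set.infinite_univ
  stem_lt := by simp
  color_ne := by simp
  polychromatic := by simp [Polychromatic]

theorem exists_stem_ssubset (hχ : TwoBounded χ) (S : PolychromaticStage χ) :
    ∃ T : PolychromaticStage χ, S.stem ⊂ T.stem := by
  let E : Set ℕ := Prod.snd ''
    {p : ℕ × ℕ | p.1 < p.2 ∧ χ p.1 p.2 ∈ Set.image2 χ S.stem S.stem}
  have hE : E.Finite :=
    (hχ.finite_setOf_color_mem (S.stem.finite_toSet.image2 χ S.stem.finite_toSet)).image _
  obtain ⟨x, ⟨hxA, hxE⟩, hinf⟩ := hχ.exists_mem_setOf_color_ne_infinite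
    (S.reservoir_infinite.sdiff hE) fun a ha y hy => S.stem_lt a ha y hy.1
  have hlt : ∀ a ∈ S.stem, a < x := fun a ha => S.stem_lt a ha x hxA
  have mem_stem_of_lt {a b} (ha : a ∈ insert x S.stem) (hb : b ∈ insert x S.stem) (hab : a < b) :
      a ∈ S.stem := by
    rcases Finset.mem_insert.mp ha with rfl | ha
    · rcases Finset.mem_insert.mp hb with rfl | hb
      · exact (lt_irrefl _ hab).elim
      · exact absurd hab (hlt b hb).not_gt
    · exact ha
  refine ⟨⟨insert x S.stem, _, hinf, ?_, ?_, ?_⟩,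
    Finset.ssubset_insert fun hx => lt_irrefl x (hlt x hx)⟩
  · intro a ha y ⟨⟨hyA, _⟩, hxy, _⟩
    rcases Finset.mem_insert.mp ha with rfl | ha
    exacts [hxy, S.stem_lt a ha y hyA]
  · intro a ha b hb hab y ⟨⟨hyA, _⟩, _, hsep⟩
    have haS := mem_stem_of_lt ha hb hab
    rcases Finset.mem_insert.mp hb with rfl | hb
    exacts [hsep a haS, S.color_ne a haS b hb hab y hyA]
  · rw [Finset.coe_insert]
    refine S.polychromatic.insert_of_forall_lt hlt ?_ fun a ha b hb hab =>
      S.color_ne a ha b hb hab x hxA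
    intro a ha b hb c hc _ hcol
    exact hxE ⟨(a, x), ⟨hlt a ha, hcol ▸ Set.mem_image2_of_mem hb hc⟩, rfl⟩

end PolychromaticStage

end

/-- The rainbow Ramsey theorem: every 2-bounded coloring of pairs of naturals admits an
infinite polychromatic set. -/
theorem rainbow_ramsey {C : Type*} (χ : ℕ → ℕ → C) (hχ : TwoBounded χ) :
    ∃ Y : Set ℕ, Y.Infinite ∧ Polychromatic χ Y := by
  choose next hnext using PolychromaticStage.exists_stem_ssubset hχ
  let stem (n : ℕ) : Set ℕ := (next^[n] PolychromaticStage.empty).stem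
  have hstem : StrictMono stem := strictMono_nat_of_lt_succ fun n => by
    simpa only [stem, Function.iterate_succ_apply', Finset.coe_ssubset] using hnext _
  exact ⟨⋃ n, stem n, Set.infinite_iUnion hstem.injective,
    Polychromatic.iUnion hstem.monotone fun n => (next^[n] _).polychromatic⟩
end

section
/- Let X be a set, n, k ∈ ℕ with k ≥ 1, and let χ : [X]ⁿ → C be a k-bounded coloring. Then there exists a coloring χ* : [X]ⁿ → {0,…,k−1} such that every Y ⊆ X that is monochromatic for χ* is polychromatic for χ. -/
/-- `χ` is `k`-bounded as a coloring of the `n`-element subsets of `α`. -/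
def KBounded {α C : Type*} (n k : ℕ) (χ : Finset α → C) : Prop :=
  ∀ c : C, {s : Finset α | s.card = n ∧ χ s = c}.encard ≤ k

/-- `Y` is monochromatic for `χ` as a coloring of `n`-element subsets. -/
def MonochromaticOn {α C : Type*} (n : ℕ) (χ : Finset α → C) (Y : Set α) : Prop :=
  ∀ s t : Finset α, ↑s ⊆ Y → ↑t ⊆ Y → s.card = n → t.card = n → χ s = χ t

/-- `Y` is polychromatic for `χ` as a coloring of `n`-element subsets. -/
def PolychromaticOn {α C : Type*} (n : ℕ) (χ : Finset α → C) (Y : Set α) : Prop :=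
  ∀ s t : Finset α, ↑s ⊆ Y → ↑t ⊆ Y → s.card = n → t.card = n → χ s = χ t → s = t

/-! Give every `χ`-color class of size at most `k` its own numbering by `Fin k`, and let `χ*`
be that number. Two `n`-sets with the same `χ`-color and the same `χ*`-color are then equal,
so on a `χ*`-monochromatic set the `χ`-colors of distinct `n`-sets differ. -/

open Set

theorem Set.exists_injOn_fin_of_encard_le {β : Type*} {s : Set β} {k : ℕ} [NeZero k]
    (hs : s.encard ≤ k) : ∃ f : β → Fin k, InjOn f s := by
  have hle : s.encard ≤ (univ : Set (Fin k)).encard := by simpa using hs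
  obtain ⟨f, -, hf⟩ := (finite_of_encard_le_coe hs).exists_injOn_of_encard_le hle
  exact ⟨f, hf⟩

theorem Set.exists_injOn_prodMk_fin {β C : Type*} {S : Set β} {k : ℕ} [NeZero k] (χ : β → C)
    (hχ : ∀ c, {x | x ∈ S ∧ χ x = c}.encard ≤ k) :
    ∃ g : β → Fin k, InjOn (fun x => (χ x, g x)) S := by
  choose f hf using fun c => exists_injOn_fin_of_encard_le (hχ c)
  refine ⟨fun x => f (χ x) x, fun x hx y hy hxy => ?_⟩
  obtain ⟨hcolor, hnumber⟩ := Prod.mk.inj hxy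
  exact hf (χ x) ⟨hx, rfl⟩ ⟨hy, hcolor.symm⟩ (by simpa only [hcolor] using hnumber)

/-- Galvin's trick: for any `k`-bounded coloring `χ` of `[X]ⁿ` there is a coloring `χ*`
with `k` colors such that any set monochromatic for `χ*` is polychromatic for `χ`. -/
theorem galvin_trick {α C : Type*} (n k : ℕ) (hk : 1 ≤ k) (χ : Finset α → C)
    (hχ : KBounded n k χ) :
    ∃ χstar : Finset α → Fin k, ∀ Y : Set α,
      MonochromaticOn n χstar Y → PolychromaticOn n χ Y := by
  have : NeZero k := ⟨by omega⟩
  obtain ⟨χstar, hinj⟩ := exists_injOn_prodMk_fin (S := {s : Finset α | s.card = n}) χ hχ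
  exact ⟨χstar, fun Y hY s t hs ht hsn htn hst =>
    hinj hsn htn (Prod.ext hst (hY s t hs ht hsn htn))⟩
end

section
/- Let K be an infinite set. There exists an injective map f : [K]^ω → [K]^ω such that for every countably infinite x ⊆ K, f(x) is a proper subset of x. -/
/-!
Fix, for every infinite set `s`, an injective sequence `e` that is eventually inside `s`, chosen
so that it depends only on `s` up to finite modification. Let `n` be the least index from which on
`e` stays inside `s`, and remove `e n` from `s`. Removing one point does not change the chosen
sequence, and the least index of the smaller set is `n + 1`; so `s` is recovered from its image by
putting back the point of index `n`, which makes the map injective.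
-/

open Set Filter Function

section

variable {α : Type*}

section tailIndex

variable (e : ℕ → α) (s : Set α)

noncomputable def tailIndex : ℕ := sInf {n | ∀ k, n ≤ k → e k ∈ s}

variable {e s}

theorem tailIndex_le {n : ℕ} (h : ∀ k, n ≤ k → e k ∈ s) : tailIndex e s ≤ n :=
  Nat.sInf_le h

theorem mem_of_tailIndex_le (hs : ∀ᶠ k in atTop, e k ∈ s) {k : ℕ} (hk : tailIndex e s ≤ k) :
    e k ∈ s :=
  Nat.sInf_mem (s := {n | ∀ k, n ≤ k → e k ∈ s}) (eventually_atTop.1 hs) k hk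

theorem tailIndex_sdiff_singleton (he : Injective e) (hs : ∀ᶠ k in atTop, e k ∈ s) :
    tailIndex e (s \ {e (tailIndex e s)}) = tailIndex e s + 1 := by
  set n := tailIndex e s
  have htail : ∀ k, n + 1 ≤ k → e k ∈ s \ {e n} := fun k hk =>
    ⟨mem_of_tailIndex_le hs (by omega), fun h => by have := he h; omega⟩
  refine (tailIndex_le htail).antisymm (Nat.succ_le_of_lt (lt_of_not_ge fun hle => ?_))
  exact (mem_of_tailIndex_le (eventually_atTop.2 ⟨_, htail⟩) hle).2 rfl

theorem injOn_sdiff_singleton_tailIndex (he : Injective e) :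
    InjOn (fun s => s \ {e (tailIndex e s)}) {s | ∀ᶠ k in atTop, e k ∈ s} := by
  intro s hs t ht (hst : s \ {e (tailIndex e s)} = t \ {e (tailIndex e t)})
  have hn : tailIndex e s = tailIndex e t := Nat.add_right_cancel (m := 1) <| by
    rw [← tailIndex_sdiff_singleton he hs, ← tailIndex_sdiff_singleton he ht]
    exact congrArg (tailIndex e) hst
  rw [← insert_eq_of_mem (mem_of_tailIndex_le hs le_rfl),
    ← insert_eq_of_mem (mem_of_tailIndex_le ht le_rfl), ← insert_sdiff_singleton,
    ← insert_sdiff_singleton (s := t), hn]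
  exact congrArg (insert _) (hn ▸ hst)

end tailIndex

theorem eventually_mem_congr_of_eventuallyEq {e : ℕ → α} (he : Injective e) {s t : Set α}
    (hst : s =ᶠ[cofinite] t) : (∀ᶠ k in atTop, e k ∈ s) ↔ ∀ᶠ k in atTop, e k ∈ t := by
  rw [← Nat.cofinite_eq_atTop]
  exact eventually_congr (he.tendsto_cofinite.eventually (eventuallyEq_set.1 hst))

theorem sdiff_singleton_eventuallyEq_cofinite (s : Set α) (a : α) :
    (s \ {a} : Set α) =ᶠ[cofinite] s :=
  eventuallyEq_set.2 <| (eventually_cofinite_ne a).mono fun _ hx => by simp [hx]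

section eventualSeq

variable [Nonempty α]

noncomputable def eventualSeq (s : Set α) : ℕ → α :=
  Classical.epsilon fun e => Injective e ∧ ∀ᶠ k in atTop, e k ∈ s

theorem Set.Infinite.eventualSeq_spec {s : Set α} (hs : s.Infinite) :
    Injective (eventualSeq s) ∧ ∀ᶠ k in atTop, eventualSeq s k ∈ s :=
  Classical.epsilon_spec (p := fun e => Injective e ∧ ∀ᶠ k in atTop, e k ∈ s)
    ⟨fun n => hs.natEmbedding s n, Subtype.val_injective.comp (hs.natEmbedding s).injective,
      Eventually.of_forall fun n => (hs.natEmbedding s n).2⟩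

theorem eventualSeq_congr {s t : Set α} (hst : s =ᶠ[cofinite] t) :
    eventualSeq s = eventualSeq t := by
  unfold eventualSeq
  congr 1
  ext e
  exact and_congr_right fun he => eventually_mem_congr_of_eventuallyEq he hst

noncomputable def shrinkPoint (s : Set α) : α := eventualSeq s (tailIndex (eventualSeq s) s)

theorem Set.Infinite.shrinkPoint_mem {s : Set α} (hs : s.Infinite) : shrinkPoint s ∈ s :=
  mem_of_tailIndex_le hs.eventualSeq_spec.2 le_rfl

theorem injOn_sdiff_singleton_shrinkPoint :
    InjOn (fun s : Set α => s \ {shrinkPoint s}) {s | s.Infinite} := by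
  intro s hs t ht hst
  have hseq : eventualSeq s = eventualSeq t :=
    eventualSeq_congr <| (sdiff_singleton_eventuallyEq_cofinite s _).symm.trans <|
      (EventuallyEq.of_eq hst).trans (sdiff_singleton_eventuallyEq_cofinite t _)
  obtain ⟨he, hse⟩ := hseq ▸ hs.eventualSeq_spec
  refine injOn_sdiff_singleton_tailIndex he hse ht.eventualSeq_spec.2 ?_
  simpa only [shrinkPoint, hseq] using hst

end eventualSeq

end

/-- For any infinite set `K` there is an injective map from the countably infinite subsets of `K`
to themselves with `f x` a proper subset of `x` for every `x`. -/
theorem exists_injective_proper_shrink {α : Type*} [Infinite α] :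
    ∃ f : {s : Set α // s.Countable ∧ s.Infinite} → {s : Set α // s.Countable ∧ s.Infinite},
      Function.Injective f ∧ ∀ x, (f x : Set α) ⊂ (x : Set α) := by
  refine ⟨fun x => ⟨x.1 \ {shrinkPoint x.1}, x.2.1.mono sdiff_subset,
    x.2.2.sdiff (finite_singleton _)⟩, fun x y hxy => ?_, fun x => ?_⟩
  · exact Subtype.ext <| injOn_sdiff_singleton_shrinkPoint x.2.2 y.2.2 (congrArg Subtype.val hxy)
  · exact sdiff_singleton_ssubset.2 x.2.2.shrinkPoint_mem
end

section
/- Fix a 2-bounded coloring χ : [ℕ]² → C and let A ⊆ ℕ be normal for χ. Suppose X ⊆ A is a finite polychromatic set with |X| ≤ n, and a₀ < a₁ < … < aₙ are n+1 elements of A ∩ E(X). Then every z ∈ A ∩ E(X) with z > aₙ belongs to E(X ∪ {aᵢ}) for some i ≤ n; in particular the set (A ∩ E(X)) \ (E(X ∪ {a₀}) ∪ … ∪ E(X ∪ {aₙ})) is finite. -/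
/-- `A` is normal for `χ`: pairs from `A` with the same color have the same top element. -/
def NormalFor {C : Type*} (χ : ℕ → ℕ → C) (A : Set ℕ) : Prop :=
  ∀ a₀ a₁ b₀ b₁ : ℕ, a₀ ∈ A → a₁ ∈ A → b₀ ∈ A → b₁ ∈ A →
    a₀ < a₁ → b₀ < b₁ → χ a₀ a₁ = χ b₀ b₁ → a₁ = b₁

/-- `EXT χ X` is the set `E(X)` of points extending the finite polychromatic set `X`
to a polychromatic set. -/
def EXT {C : Type*} (χ : ℕ → ℕ → C) (X : Finset ℕ) : Set ℕ :=
  {a | a ∉ X ∧ Polychromatic χ (↑X ∪ {a})}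


lemma three_pairs {C : Type*} {χ : ℕ → ℕ → C} (hχ : TwoBounded χ) {p q r : ℕ × ℕ}
    (hp : p.1 < p.2) (hq : q.1 < q.2) (hr : r.1 < r.2)
    (hpq : p ≠ q) (hpr : p ≠ r) (hqr : q ≠ r)
    (h1 : χ p.1 p.2 = χ q.1 q.2) (h2 : χ p.1 p.2 = χ r.1 r.2) : False := by
  have hsub : ({p, q, r} : Set (ℕ × ℕ)) ⊆ {x : ℕ × ℕ | x.1 < x.2 ∧ χ x.1 x.2 = χ p.1 p.2} := by
    intro x hx
    simp only [Set.mem_insert_iff, Set.mem_singleton_iff] at hx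
    rcases hx with rfl | rfl | rfl
    · exact ⟨hp, rfl⟩
    · exact ⟨hq, h1.symm⟩
    · exact ⟨hr, h2.symm⟩
  have h3 : ({p, q, r} : Set (ℕ × ℕ)).encard = 3 := by
    rw [Set.encard_insert_of_notMem (by simp [hpq, hpr]), Set.encard_pair hqr]
    rfl
  have h4 := (Set.encard_mono hsub).trans (hχ (χ p.1 p.2))
  rw [h3] at h4
  norm_num at h4

/-- If `A` is normal, `X ⊆ A` is polychromatic with `|X| ≤ n`, and `a₀ < … < aₙ` lie in
`A ∩ E(X)`, then every `z ∈ A ∩ E(X)` above `aₙ` lies in some `E(X ∪ {aᵢ})`; in particular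
`A ∩ E(X)` is almost contained in the union of the `E(X ∪ {aᵢ})`. -/
theorem union_prop {C : Type*} (χ : ℕ → ℕ → C) (hχ : TwoBounded χ)
    (A : Set ℕ) (hA : NormalFor χ A) (n : ℕ) (X : Finset ℕ)
    (hXA : ↑X ⊆ A) (hXpoly : Polychromatic χ ↑X) (hXcard : X.card ≤ n)
    (a : Fin (n + 1) → ℕ) (hmono : StrictMono a) (ha : ∀ i, a i ∈ A ∩ EXT χ X) :
    (∀ z ∈ A ∩ EXT χ X, a (Fin.last n) < z → ∃ i, z ∈ EXT χ (insert (a i) X)) ∧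
    ((A ∩ EXT χ X) \ ⋃ i, EXT χ (insert (a i) X)).Finite := by
  classical
  have key : ∀ z ∈ A ∩ EXT χ X, a (Fin.last n) < z → ∃ i, z ∈ EXT χ (insert (a i) X) := by
    intro z hz hza
    obtain ⟨hzA, hzX, H2⟩ : z ∈ A ∧ z ∉ X ∧ Polychromatic χ (↑X ∪ {z}) :=
      ⟨hz.1, hz.2.1, hz.2.2⟩
    have haz : ∀ i, a i < z := fun i => lt_of_le_of_lt (hmono.monotone (Fin.le_last i)) hza
    have haA : ∀ i, a i ∈ A := fun i => (ha i).1
    have haX : ∀ i, a i ∉ X := fun i => (ha i).2.1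
    -- find a good index
    have hgood : ∃ i, ∀ x ∈ X, ¬((x < z ∧ χ x z = χ (a i) z) ∨ (z < x ∧ χ z x = χ (a i) x)) := by
      by_contra h
      push_neg at h
      choose f hfX hf using h
      have hinj : Function.Injective f := by
        intro i j hij
        by_contra hne
        have hai : a i ≠ a j := fun e => hne (hmono.injective e)
        rcases hf i with ⟨h1, h2⟩ | ⟨h1, h2⟩ <;> rcases hf j with ⟨h3, h4⟩ | ⟨h3, h4⟩
        · exact three_pairs hχ (p := (f i, z)) (q := (a i, z)) (r := (a j, z))
            h1 (haz i) (haz j)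
            (by simp only [Prod.ext_iff, Ne, not_and]; exact fun e _ => haX i (e ▸ hfX i))
            (by simp only [Prod.ext_iff, Ne, not_and]; exact fun e _ => haX j (e ▸ hij ▸ hfX j))
            (by simp [Prod.ext_iff, hai])
            h2 (by rw [hij]; exact h4)
        · exact absurd (hij ▸ h1) (asymm h3)
        · exact absurd (hij ▸ h1) (asymm h3)
        · exact three_pairs hχ (p := (z, f i)) (q := (a i, f i)) (r := (a j, f i))
            h1 ((haz i).trans h1) ((haz j).trans h1)
            (by simp only [Prod.ext_iff, Ne, not_and]; exact fun e _ => absurd (e ▸ haz i) (lt_irrefl _))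
            (by simp only [Prod.ext_iff, Ne, not_and]; exact fun e _ => absurd (e ▸ haz j) (lt_irrefl _))
            (by simp [Prod.ext_iff, hai])
            h2 (by rw [hij]; exact h4)
      have hcard : n + 1 ≤ X.card := by
        have := Finset.card_le_card_of_injOn (s := (Finset.univ : Finset (Fin (n+1)))) f (fun i _ => hfX i) hinj.injOn
        simpa using this
      omega
    obtain ⟨i, hgi⟩ := hgood
    refine ⟨i, ?_, ?_⟩
    · simp only [Finset.mem_insert, not_or]
      exact ⟨fun e => absurd (e ▸ haz i) (lt_irrefl _), hzX⟩
    · set k := a i with hk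
      have hkz : k < z := haz i
      have H1 : Polychromatic χ (↑X ∪ {k}) := (ha i).2.2
      have memA : ∀ w : ℕ, w ∈ (↑(insert k X) : Set ℕ) ∪ {z} → w ∈ A := by
        intro w hw
        simp only [Set.mem_union, Finset.coe_insert, Set.mem_insert_iff,
          Set.mem_singleton_iff, Finset.mem_coe] at hw
        rcases hw with (rfl | hw) | rfl
        · exact haA i
        · exact hXA hw
        · exact hzA
      intro p q r s hp hq hr hs hpq hrs hcol
      have hqs : q = s := hA p q r s (memA p hp) (memA q hq) (memA r hr) (memA s hs) hpq hrs hcol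
      subst hqs
      refine ⟨?_, rfl⟩
      have hmem : ∀ w : ℕ, w ∈ (↑(insert k X) : Set ℕ) ∪ {z} → w = z ∨ w = k ∨ w ∈ X := by
        intro w hw
        simp only [Set.mem_union, Finset.coe_insert, Set.mem_insert_iff,
          Set.mem_singleton_iff, Finset.mem_coe] at hw
        tauto
      have hmemXk : ∀ w : ℕ, w = k ∨ w ∈ X → w ∈ (↑X : Set ℕ) ∪ {k} := by
        rintro w (rfl | hw)
        · exact Or.inr rfl
        · exact Or.inl hw
      have hmemXz : ∀ w : ℕ, w ∈ X → w ∈ (↑X : Set ℕ) ∪ {z} := fun w hw => Or.inl hw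
      by_cases hqz : q = z
      · have hpq' : p < z := hqz ▸ hpq
        have hrs' : r < z := hqz ▸ hrs
        have hcol' : χ p z = χ r z := by rw [← hqz]; exact hcol
        have hpz : p ≠ z := ne_of_lt hpq'
        have hrz : r ≠ z := ne_of_lt hrs'
        rcases (hmem p hp).resolve_left hpz with rfl | hpX
        · rcases (hmem r hr).resolve_left hrz with rfl | hrX
          · rfl
          · exact absurd (Or.inl ⟨hrs', hcol'.symm⟩) (hgi r hrX)
        · rcases (hmem r hr).resolve_left hrz with rfl | hrX
          · exact absurd (Or.inl ⟨hpq', hcol'⟩) (hgi p hpX)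
          · exact (H2 p z r z (hmemXz p hpX) (Or.inr rfl) (hmemXz r hrX) (Or.inr rfl)
              hpq' hrs' hcol').1
      · -- q ≠ z
        have hqmem : q = k ∨ q ∈ X := (hmem q hq).resolve_left hqz
        by_cases hpz : p = z
        · have hzq : z < q := hpz ▸ hpq
          have hqX : q ∈ X := by
            rcases hqmem with rfl | h
            · exact absurd hzq (asymm hkz)
            · exact h
          have hcol' : χ z q = χ r q := by rw [← hpz]; exact hcol
          by_cases hrz : r = z
          · rw [hpz, hrz]
          · rcases (hmem r hr).resolve_left hrz with rfl | hrX
            · exact absurd (Or.inr ⟨hzq, hcol'⟩) (hgi q hqX)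
            · exact absurd (H2 r q z q (hmemXz r hrX) (hmemXz q hqX) (Or.inr rfl)
                (hmemXz q hqX) hrs hzq hcol'.symm).1 hrz
        · by_cases hrz : r = z
          · have hzq : z < q := hrz ▸ hrs
            have hqX : q ∈ X := by
              rcases hqmem with rfl | h
              · exact absurd hzq (asymm hkz)
              · exact h
            have hcol' : χ p q = χ z q := by rw [← hrz]; exact hcol
            rcases (hmem p hp).resolve_left hpz with rfl | hpX
            · exact absurd (Or.inr ⟨hzq, hcol'.symm⟩) (hgi q hqX)
            · exact absurd (H2 p q z q (hmemXz p hpX) (hmemXz q hqX) (Or.inr rfl)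
                (hmemXz q hqX) hpq hzq hcol').1 hpz
          · exact (H1 p q r q (hmemXk p ((hmem p hp).resolve_left hpz))
              (hmemXk q hqmem) (hmemXk r ((hmem r hr).resolve_left hrz))
              (hmemXk q hqmem) hpq hrs hcol).1
  refine ⟨key, ?_⟩
  apply Set.Finite.subset (Set.finite_Iic (a (Fin.last n)))
  intro z hz
  by_contra h
  obtain ⟨i, hi⟩ := key z hz.1 (lt_of_not_ge h)
  exact hz.2 (Set.mem_iUnion.mpr ⟨i, hi⟩)
end

section
/- Fix a 2-bounded coloring χ : [ℕ]² → C, let A ⊆ ℕ be normal for χ, and let I be an ideal on ℕ. Let X ⊆ A be polychromatic with |X| ≤ n, and suppose A ∩ E(X) ∉ I. Then the set {a ∈ A ∩ E(X) : A ∩ E(X ∪ {a}) ∈ I} has at most n elements. -/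
/-- `I` is an ideal on `ℕ`: it contains all finite sets, is closed under subsets and
finite unions, and does not contain `ℕ` itself. -/
def IsIdeal (I : Set (Set ℕ)) : Prop :=
  (∀ s : Set ℕ, s.Finite → s ∈ I) ∧ (∀ s t : Set ℕ, s ⊆ t → t ∈ I → s ∈ I) ∧
  (∀ s t : Set ℕ, s ∈ I → t ∈ I → s ∪ t ∈ I) ∧ Set.univ ∉ I

/-- If `A` is normal, `I` an ideal, `X ⊆ A` polychromatic with `|X| ≤ n` and `A ∩ E(X) ∉ I`,
then there are at most `n` points `a ∈ A ∩ E(X)` with `A ∩ E(X ∪ {a}) ∈ I`. -/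
theorem ideal_lemma {C : Type*} (χ : ℕ → ℕ → C) (hχ : TwoBounded χ)
    (A : Set ℕ) (hA : NormalFor χ A) (I : Set (Set ℕ)) (hI : IsIdeal I)
    (n : ℕ) (X : Finset ℕ) (hXA : ↑X ⊆ A) (hXpoly : Polychromatic χ ↑X)
    (hXcard : X.card ≤ n) (hEX : A ∩ EXT χ X ∉ I) :
    {a ∈ A ∩ EXT χ X | A ∩ EXT χ (insert a X) ∈ I}.encard ≤ n := by
  classical
  by_contra hcon
  push_neg at hcon
  -- extract a subset of size n+1
  have hle : ((n + 1 : ℕ) : ℕ∞) ≤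
      {a ∈ A ∩ EXT χ X | A ∩ EXT χ (insert a X) ∈ I}.encard := by
    exact_mod_cast Order.add_one_le_of_lt hcon
  obtain ⟨S, hS_sub, hS_card⟩ := Set.exists_subset_encard_eq hle
  have hS_fin : S.Finite := Set.finite_of_encard_eq_coe hS_card
  set T : Finset ℕ := hS_fin.toFinset with hT_def
  have hT_card : T.card = n + 1 := by
    have := hS_fin.encard_eq_coe_toFinset_card
    rw [hS_card] at this
    exact_mod_cast this.symm
  have hT_mem : ∀ a ∈ T, a ∈ A ∧ a ∈ EXT χ X ∧ A ∩ EXT χ (insert a X) ∈ I := by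
    intro a ha
    have := hS_sub (hS_fin.mem_toFinset.mp ha)
    exact ⟨this.1.1, this.1.2, this.2⟩
  -- the union of the small sets is in the ideal
  have hunion : ∀ (T' : Finset ℕ), (∀ a ∈ T', A ∩ EXT χ (insert a X) ∈ I) →
      (⋃ a ∈ T', A ∩ EXT χ (insert a X)) ∈ I := by
    intro T'
    induction T' using Finset.induction_on with
    | empty => intro _; simpa using hI.1 ∅ Set.finite_empty
    | @insert a s ha ih =>
        intro hg
        rw [Finset.set_biUnion_insert]
        exact hI.2.2.1 _ _ (hg _ (Finset.mem_insert_self _ _))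
          (ih fun a' ha' => hg a' (Finset.mem_insert_of_mem ha'))
  have hU : (⋃ a ∈ T, A ∩ EXT χ (insert a X)) ∈ I :=
    hunion T fun a ha => (hT_mem a ha).2.2
  set N : ℕ := (T ∪ X).sup id with hN_def
  have hNT : ∀ a ∈ T, a ≤ N := fun a ha =>
    Finset.le_sup (f := id) (Finset.mem_union_left _ ha)
  have hNX : ∀ x ∈ X, x ≤ N := fun x hx =>
    Finset.le_sup (f := id) (Finset.mem_union_right _ hx)
  have hUF : (⋃ a ∈ T, A ∩ EXT χ (insert a X)) ∪ Set.Iic N ∈ I :=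
    hI.2.2.1 _ _ hU (hI.1 _ (Set.finite_Iic N))
  -- pick b
  have hb_ex : ∃ b ∈ A ∩ EXT χ X,
      b ∉ (⋃ a ∈ T, A ∩ EXT χ (insert a X)) ∪ Set.Iic N := by
    by_contra hb
    push_neg at hb
    exact hEX (hI.2.1 _ _ hb hUF)
  obtain ⟨b, ⟨hbA, hbE⟩, hbU⟩ := hb_ex
  have hbU' : b ∉ ⋃ a ∈ T, A ∩ EXT χ (insert a X) := fun h => hbU (Or.inl h)
  have hbN : N < b := by
    by_contra h
    exact hbU (Or.inr (le_of_not_gt h))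
  have hbX : b ∉ X := hbE.1
  have hb_poly : Polychromatic χ (↑X ∪ {b}) := hbE.2
  -- key claim
  have key : ∀ a : ℕ, ∃ x : ℕ, a ∈ T → x ∈ X ∧ χ a b = χ x b := by
    intro a
    by_cases ha : a ∈ T
    swap
    · exact ⟨0, fun h => absurd h ha⟩
    obtain ⟨haA, haE, haI⟩ := hT_mem a ha
    have haX : a ∉ X := haE.1
    have ha_poly : Polychromatic χ (↑X ∪ {a}) := haE.2
    have hab : a < b := lt_of_le_of_lt (hNT a ha) hbN
    -- b is not in EXT χ (insert a X)
    have hbnot : b ∉ EXT χ (insert a X) := by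
      intro h
      exact hbU' (Set.mem_biUnion ha ⟨hbA, h⟩)
    have hbnotins : b ∉ insert a X := by
      intro h
      rcases Finset.mem_insert.mp h with h | h
      · exact absurd h (Nat.ne_of_gt hab)
      · exact hbX h
    have hnotpoly : ¬ Polychromatic χ (↑(insert a X) ∪ {b}) := by
      intro h
      exact hbnot ⟨hbnotins, h⟩
    unfold Polychromatic at hnotpoly
    push_neg at hnotpoly
    obtain ⟨p, q, r, s, hp, hq, hr, hs, hpq, hrs, hcol, hne⟩ := hnotpoly
    -- memberships
    have hmem : ∀ e, e ∈ (↑(insert a X) : Set ℕ) ∪ {b} → e ∈ A ∧ (e = b ∨ e ≤ N) := by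
      intro e he
      rcases he with he | he
      · rw [Finset.coe_insert] at he
        rcases he with he | he
        · exact ⟨he ▸ haA, Or.inr (he ▸ hNT a ha)⟩
        · exact ⟨hXA he, Or.inr (hNX e he)⟩
      · rw [Set.mem_singleton_iff] at he
        exact ⟨he ▸ hbA, Or.inl he⟩
    have hmem' : ∀ e, e ∈ (↑(insert a X) : Set ℕ) ∪ {b} → e ≠ b →
        e ∈ insert a (↑X : Set ℕ) := by
      intro e he hne'
      rcases he with he | he
      · rwa [Finset.coe_insert] at he
      · exact absurd (Set.mem_singleton_iff.mp he) hne'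
    have hqs : q = s :=
      hA p q r s (hmem p hp).1 (hmem q hq).1 (hmem r hr).1 (hmem s hs).1 hpq hrs hcol
    have hpr : p ≠ r := fun h => hne h hqs
    -- q must equal b
    have hqb : q = b := by
      by_contra hqb
      have hsb : s ≠ b := hqs ▸ hqb
      have hq' : q ∈ insert a (↑X : Set ℕ) := hmem' q hq hqb
      have hs' : s ∈ insert a (↑X : Set ℕ) := hmem' s hs hsb
      have hqN : q ≤ N := by
        rcases (hmem q hq).2 with h | h
        · exact absurd h hqb
        · exact h
      have hsN : s ≤ N := hqs ▸ hqN
      have hpb : p ≠ b := fun h => absurd (h ▸ hpq) (not_lt.mpr (le_of_lt (lt_of_le_of_lt hqN hbN)))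
      have hrb : r ≠ b := fun h => absurd (h ▸ hrs) (not_lt.mpr (le_of_lt (lt_of_le_of_lt hsN hbN)))
      have hp' : p ∈ insert a (↑X : Set ℕ) := hmem' p hp hpb
      have hr' : r ∈ insert a (↑X : Set ℕ) := hmem' r hr hrb
      rw [← Set.union_singleton] at hp' hq' hr' hs'
      have := ha_poly p q r s hp' hq' hr' hs' hpq hrs hcol
      exact hne this.1 this.2
    have hsb : s = b := hqs ▸ hqb
    rw [hqb] at hpq hcol
    rw [hsb] at hrs hcol
    have hp' : p ∈ insert a (↑X : Set ℕ) := hmem' p hp (Nat.ne_of_lt hpq)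
    have hr' : r ∈ insert a (↑X : Set ℕ) := hmem' r hr (Nat.ne_of_lt hrs)
    -- not both in X
    have hnotboth : ¬ (p ∈ (↑X : Set ℕ) ∧ r ∈ (↑X : Set ℕ)) := by
      rintro ⟨hpX, hrX⟩
      have := hb_poly p b r b (Or.inl hpX) (Or.inr rfl) (Or.inl hrX) (Or.inr rfl)
        hpq hrs hcol
      exact hpr this.1
    rcases Set.mem_insert_iff.mp hp' with hpa | hpX
    · rcases Set.mem_insert_iff.mp hr' with hra | hrX
      · exact absurd (hpa.trans hra.symm) hpr
      · exact ⟨r, fun _ => ⟨hrX, hpa ▸ hcol⟩⟩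
    · rcases Set.mem_insert_iff.mp hr' with hra | hrX
      · exact ⟨p, fun _ => ⟨hpX, hra ▸ hcol.symm⟩⟩
      · exact absurd ⟨hpX, hrX⟩ hnotboth
  choose f hf using key
  have hmaps : ∀ a ∈ T, f a ∈ X := fun a ha => (hf a ha).1
  have hinj : Set.InjOn f ↑T := by
    intro i hi j hj hij
    by_contra hne2
    have hiT : i ∈ T := hi
    have hjT : j ∈ T := hj
    have h1 : χ i b = χ (f i) b := (hf i hiT).2
    have h2 : χ j b = χ (f i) b := hij ▸ (hf j hjT).2
    have hiX : i ∉ X := (hT_mem i hiT).2.1.1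
    have hjX : j ∉ X := (hT_mem j hjT).2.1.1
    have hib : i < b := lt_of_le_of_lt (hNT i hiT) hbN
    have hjb : j < b := lt_of_le_of_lt (hNT j hjT) hbN
    have hfib : f i < b := lt_of_le_of_lt (hNX _ (hmaps i hiT)) hbN
    have hine : i ≠ f i := fun h => hiX (h ▸ hmaps i hiT)
    have hjne : j ≠ f i := fun h => hjX (h ▸ hmaps i hiT)
    have hsub3 : ({(i, b), (j, b), (f i, b)} : Set (ℕ × ℕ)) ⊆
        {p : ℕ × ℕ | p.1 < p.2 ∧ χ p.1 p.2 = χ (f i) b} := by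
      intro p hp
      simp only [Set.mem_insert_iff, Set.mem_singleton_iff] at hp
      rcases hp with rfl | rfl | rfl
      · exact ⟨hib, h1⟩
      · exact ⟨hjb, h2⟩
      · exact ⟨hfib, rfl⟩
    have hpair : ((j, b) : ℕ × ℕ) ≠ (f i, b) := by
      simp only [ne_eq, Prod.mk.injEq, not_and]
      exact fun h _ => hjne h
    have hnotmem : ((i, b) : ℕ × ℕ) ∉ ({(j, b), (f i, b)} : Set (ℕ × ℕ)) := by
      simp only [Set.mem_insert_iff, Set.mem_singleton_iff, Prod.mk.injEq, not_or, not_and]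
      exact ⟨fun h _ => hne2 h, fun h _ => hine h⟩
    have hcard3 : ({(i, b), (j, b), (f i, b)} : Set (ℕ × ℕ)).encard = 3 := by
      rw [Set.encard_insert_of_notMem hnotmem, Set.encard_pair hpair]
      rfl
    have h32 : (3 : ℕ∞) ≤ 2 := hcard3 ▸ le_trans (Set.encard_mono hsub3) (hχ _)
    norm_num at h32
  have hfin : T.card ≤ X.card := Finset.card_le_card_of_injOn f hmaps hinj
  omega
end

section
/- Let g : ℕ × ℕ → ℕ satisfy g(1, n) = n + 1 for all n, and g(k+1, n) > 2·g(k, n) for all k ≥ 1 and all n. Let f : ℕ → ℕ be a function such that for every k ≥ 1 and every l ∈ ℕ, f(n) ≥ g(k, n) + l for all sufficiently large n. Define I to be the collection of all sets A ⊆ ℕ for which there exist l ∈ ℕ, k ≥ 1 and N ∈ ℕ such that for all n ≥ N, |A ∩ [l, f(n))| < g(k, n). Then I is an ideal on ℕ, and I contains every set A ⊆ ℕ satisfying f ≤* e_A, where e_A is the increasing enumeration of A. -/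
open Set

lemma encard_inter_Iio_eq_count (A : Set ℕ) [DecidablePred (· ∈ A)] (m : ℕ) :
    (A ∩ Iio m).encard = Nat.count (· ∈ A) m := by
  rw [Nat.count_eq_card_filter_range, ← encard_coe_eq_coe_finsetCard]
  congr 1
  ext x
  simp [and_comm]

lemma encard_inter_Iio_nth {A : Set ℕ} (hA : A.Infinite) (n : ℕ) :
    (A ∩ Iio (Nat.nth (· ∈ A) n)).encard = n := by
  classical
  rw [encard_inter_Iio_eq_count, Nat.count_nth_of_infinite (p := (· ∈ A)) hA]

/-- The family `I` of the statement. -/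
def rapidIdeal (g : ℕ → ℕ → ℕ) (f : ℕ → ℕ) : Set (Set ℕ) :=
  {A | ∃ l k N, 1 ≤ k ∧ ∀ n, N ≤ n → (A ∩ Ico l (f n)).encard < g k n}

namespace rapidIdeal

variable {g : ℕ → ℕ → ℕ} {f : ℕ → ℕ}

lemma monotoneOn_of_two_mul_lt (hg : ∀ k, 1 ≤ k → ∀ n, 2 * g k n < g (k + 1) n) (n : ℕ) :
    MonotoneOn (g · n) (Ici 1) :=
  monotoneOn_nat_Ici_of_le_succ fun k hk ↦ by have := hg k hk n; omega

lemma add_lt_succ_max (hg : ∀ k, 1 ≤ k → ∀ n, 2 * g k n < g (k + 1) n)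
    {k₁ k₂ : ℕ} (hk₁ : 1 ≤ k₁) (hk₂ : 1 ≤ k₂) (n : ℕ) :
    g k₁ n + g k₂ n < g (max k₁ k₂ + 1) n := by
  have hk : 1 ≤ max k₁ k₂ := le_max_of_le_left hk₁
  have h₁ : g k₁ n ≤ g (max k₁ k₂) n := monotoneOn_of_two_mul_lt hg n hk₁ hk (le_max_left _ _)
  have h₂ : g k₂ n ≤ g (max k₁ k₂) n := monotoneOn_of_two_mul_lt hg n hk₂ hk (le_max_right _ _)
  have := hg _ hk n
  omega

lemma mem_of_finite (hg1 : ∀ n, g 1 n = n + 1) {s : Set ℕ} (hs : s.Finite) :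
    s ∈ rapidIdeal g f := by
  obtain ⟨l, hl⟩ := hs.bddAbove
  refine ⟨l + 1, 1, 0, le_rfl, fun n _ ↦ ?_⟩
  have hempty : s ∩ Ico (l + 1) (f n) = ∅ :=
    eq_empty_of_forall_notMem fun x ⟨hx, hlx, _⟩ ↦ by have := hl hx; omega
  rw [hempty, encard_empty, hg1]
  exact_mod_cast n.succ_pos

lemma mem_of_subset {s t : Set ℕ} (hst : s ⊆ t) (ht : t ∈ rapidIdeal g f) :
    s ∈ rapidIdeal g f := by
  obtain ⟨l, k, N, hk, h⟩ := ht
  exact ⟨l, k, N, hk, fun n hn ↦ (encard_mono (inter_subset_inter_left _ hst)).trans_lt (h n hn)⟩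

lemma union_mem (hg : ∀ k, 1 ≤ k → ∀ n, 2 * g k n < g (k + 1) n) {s t : Set ℕ}
    (hs : s ∈ rapidIdeal g f) (ht : t ∈ rapidIdeal g f) : s ∪ t ∈ rapidIdeal g f := by
  obtain ⟨l₁, k₁, N₁, hk₁, h₁⟩ := hs
  obtain ⟨l₂, k₂, N₂, hk₂, h₂⟩ := ht
  refine ⟨max l₁ l₂, max k₁ k₂ + 1, max N₁ N₂, by omega, fun n hn ↦ ?_⟩
  have trace_le {u : Set ℕ} {l : ℕ} (hl : l ≤ max l₁ l₂) :
      (u ∩ Ico (max l₁ l₂) (f n)).encard ≤ (u ∩ Ico l (f n)).encard :=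
    encard_mono (inter_subset_inter_right _ (Ico_subset_Ico_left hl))
  calc ((s ∪ t) ∩ Ico (max l₁ l₂) (f n)).encard
      ≤ (s ∩ Ico (max l₁ l₂) (f n)).encard + (t ∩ Ico (max l₁ l₂) (f n)).encard := by
        rw [union_inter_distrib_right]
        exact encard_union_le _ _
    _ < g k₁ n + g k₂ n :=
        ENat.add_lt_add ((trace_le (le_max_left _ _)).trans_lt (h₁ n (le_of_max_le_left hn)))
          ((trace_le (le_max_right _ _)).trans_lt (h₂ n (le_of_max_le_right hn)))
    _ ≤ g (max k₁ k₂ + 1) n := by exact_mod_cast (add_lt_succ_max hg hk₁ hk₂ n).le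

lemma univ_notMem (hf : ∀ k, 1 ≤ k → ∀ l : ℕ, ∃ N, ∀ n, N ≤ n → g k n + l ≤ f n) :
    univ ∉ rapidIdeal g f := by
  rintro ⟨l, k, N, hk, h⟩
  obtain ⟨M, hM⟩ := hf k hk l
  have hlt := h (max M N) (le_max_right _ _)
  rw [univ_inter, ← Finset.coe_Ico, encard_coe_eq_coe_finsetCard, Nat.card_Ico,
    Nat.cast_lt] at hlt
  have := hM (max M N) (le_max_left _ _)
  omega

lemma mem_of_le_nth (hg1 : ∀ n, g 1 n = n + 1) {A : Set ℕ} (hA : A.Infinite)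
    {N : ℕ} (hN : ∀ n, N ≤ n → f n ≤ Nat.nth (· ∈ A) n) : A ∈ rapidIdeal g f := by
  refine ⟨0, 1, N, le_rfl, fun n hn ↦ ?_⟩
  calc (A ∩ Ico 0 (f n)).encard
      ≤ (A ∩ Iio (Nat.nth (· ∈ A) n)).encard :=
        encard_mono (inter_subset_inter_right _ fun x hx ↦ hx.2.trans_le (hN n hn))
    _ = n := encard_inter_Iio_nth hA n
    _ < g 1 n := by rw [hg1]; exact_mod_cast n.lt_succ_self

end rapidIdeal

/-- The collection of sets `A` with `|A ∩ [l, f n)| < g k n` eventually (for some `l`, `k ≥ 1`)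
is an ideal on `ℕ` containing every `f`-rapid set. -/
theorem rapid_ideal (g : ℕ → ℕ → ℕ) (hg1 : ∀ n, g 1 n = n + 1)
    (hg : ∀ k, 1 ≤ k → ∀ n, 2 * g k n < g (k + 1) n)
    (f : ℕ → ℕ)
    (hf : ∀ k, 1 ≤ k → ∀ l : ℕ, ∃ N, ∀ n, N ≤ n → g k n + l ≤ f n) :
    IsIdeal {A : Set ℕ | ∃ l k N, 1 ≤ k ∧
        ∀ n, N ≤ n → (A ∩ Set.Ico l (f n)).encard < g k n} ∧
    ∀ A : Set ℕ, A.Infinite → (∃ N, ∀ n, N ≤ n → f n ≤ Nat.nth (· ∈ A) n) →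
      A ∈ {A : Set ℕ | ∃ l k N, 1 ≤ k ∧
        ∀ n, N ≤ n → (A ∩ Set.Ico l (f n)).encard < g k n} :=
  ⟨⟨fun _ ↦ rapidIdeal.mem_of_finite hg1, fun _ _ ↦ rapidIdeal.mem_of_subset,
      fun _ _ ↦ rapidIdeal.union_mem hg, rapidIdeal.univ_notMem hf⟩,
    fun _ hA ⟨_, hN⟩ ↦ rapidIdeal.mem_of_le_nth hg1 hA hN⟩
end

section
/- Define a coloring χ on the 2-element subsets of [ℕ]² by χ({e, e'}) = e ∪ e' for distinct e, e' ∈ [ℕ]². Let I be the collection of all X ⊆ [ℕ]² for which there exists N ∈ ℕ such that for every A ⊆ ℕ with |A| ≥ N, [A]² is not a subset of X. Then: (1) χ is 4-bounded; (2) I is an ideal on [ℕ]²; and (3) every X ⊆ [ℕ]² that is polychromatic for χ belongs to I. -/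
/-- An edge: a 2-element subset of `ℕ`. -/
abbrev Edge := {e : Finset ℕ // e.card = 2}

/-- The ideal of sets of edges not containing complete graphs `[A]²` for arbitrarily
large finite `A ⊆ ℕ`. -/
def edgeIdeal : Set (Set Edge) :=
  {X | ∃ N : ℕ, ∀ A : Finset ℕ, N ≤ A.card → ∃ e : Edge, (e : Finset ℕ) ⊆ A ∧ e ∉ X}

/-!
Two distinct edges span three or four points, and a pair of edges with a given union is
determined by one point of that union, so each color class of `χ` has at most four members.
Closure of the ideal under finite unions is Ramsey's theorem for pairs: a large enough set
contains a large clique of `X` or of its complement. A polychromatic `X` contains no `[A]²` with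
`|A| ≥ 4`, since a 4-set is the union of two disjoint edges in more than one way, and all these
pairs get the same color.
-/

namespace Edge

variable {X Y : Set Edge} {A B c : Finset ℕ} {a x y : ℕ}

theorem nonempty (e : Edge) : (e : Finset ℕ).Nonempty :=
  Finset.card_pos.1 (by rw [e.2]; norm_num)

theorem exists_mem_ne (e : Edge) (x : ℕ) : ∃ y ∈ (e : Finset ℕ), y ≠ x :=
  Finset.exists_mem_ne (by rw [e.2]; norm_num) x

theorem eq_pair (e : Edge) (hx : x ∈ (e : Finset ℕ)) (hy : y ∈ (e : Finset ℕ))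
    (hxy : x ≠ y) :
    (e : Finset ℕ) = {x, y} :=
  (Finset.eq_of_subset_of_card_le (Finset.insert_subset hx (Finset.singleton_subset_iff.2 hy))
    (by rw [e.2, Finset.card_pair hxy])).symm

theorem eq_of_mem_of_mem {e f : Edge} (hxe : x ∈ (e : Finset ℕ)) (hye : y ∈ (e : Finset ℕ))
    (hxf : x ∈ (f : Finset ℕ)) (hyf : y ∈ (f : Finset ℕ)) (hxy : x ≠ y) : e = f :=
  Subtype.ext ((eq_pair e hxe hye hxy).trans (eq_pair f hxf hyf hxy).symm)

theorem exists_subset (h : 2 ≤ A.card) : ∃ e : Edge, (e : Finset ℕ) ⊆ A :=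
  let ⟨e, he, hcard⟩ := Finset.exists_subset_card_eq h
  ⟨⟨e, hcard⟩, he⟩

theorem exists_eq_sdiff (hB : B.card = 4) {e : Edge} (he : (e : Finset ℕ) ⊆ B) :
    ∃ e' : Edge, (e' : Finset ℕ) = B \ e :=
  ⟨⟨B \ e, by rw [Finset.card_sdiff_of_subset he, hB, e.2]⟩, rfl⟩

theorem card_union_add_card_inter (e e' : Edge) :
    ((e : Finset ℕ) ∪ e').card + ((e : Finset ℕ) ∩ e').card = 4 := by
  rw [Finset.card_union_add_card_inter, e.2, e'.2]

theorem card_inter_le_one {e e' : Edge} (h : e ≠ e') : ((e : Finset ℕ) ∩ e').card ≤ 1 := by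
  by_contra! hlt
  have hinter : (e : Finset ℕ) ∩ e' = e :=
    Finset.eq_of_subset_of_card_le Finset.inter_subset_left (by rw [e.2]; omega)
  exact h (Subtype.ext (Finset.eq_of_subset_of_card_le (hinter ▸ Finset.inter_subset_right)
    (by rw [e.2, e'.2])))

/-- The color class of `c` under `χ({e, e'}) = e ∪ e'`. -/
def colorClass (c : Finset ℕ) : Set (Set Edge) :=
  {P | ∃ e e' : Edge, e ≠ e' ∧ P = {e, e'} ∧ (e : Finset ℕ) ∪ (e' : Finset ℕ) = c}

theorem pair_eq_setOf_of_inter_eq_singleton {e e' : Edge}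
    (hx : (e : Finset ℕ) ∩ e' = {x}) :
    ({e, e'} : Set Edge) =
      {f : Edge | (f : Finset ℕ) ⊆ (e : Finset ℕ) ∪ e' ∧ x ∈ (f : Finset ℕ)} := by
  obtain ⟨hxe, hxe'⟩ := Finset.mem_inter.1 (hx ▸ Finset.mem_singleton_self x)
  ext f
  simp only [Set.mem_insert_iff, Set.mem_singleton_iff, Set.mem_ofPred_eq]
  constructor
  · rintro (rfl | rfl)
    exacts [⟨Finset.subset_union_left, hxe⟩, ⟨Finset.subset_union_right, hxe'⟩]
  · rintro ⟨hf, hxf⟩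
    obtain ⟨y, hyf, hyx⟩ := exists_mem_ne f x
    rcases Finset.mem_union.1 (hf hyf) with hye | hye'
    · exact Or.inl (eq_of_mem_of_mem hxf hyf hxe hye hyx.symm)
    · exact Or.inr (eq_of_mem_of_mem hxf hyf hxe' hye' hyx.symm)

theorem pair_eq_setOf_of_disjoint {e e' : Edge} (hd : Disjoint (e : Finset ℕ) e')
    (ha : a ∈ (e : Finset ℕ)) (hx : x ∈ (e : Finset ℕ)) (hxa : x ≠ a) :
    ({e, e'} : Set Edge) =
      {f : Edge | (f : Finset ℕ) = {a, x} ∨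
        (f : Finset ℕ) = ((e : Finset ℕ) ∪ e') \ {a, x}} := by
  rw [← eq_pair e ha hx hxa.symm, Finset.union_sdiff_cancel_left hd]
  ext f
  simp only [Set.mem_insert_iff, Set.mem_singleton_iff, Set.mem_ofPred_eq, Subtype.ext_iff]

/-- Two distinct edges with union `c` meet in `4 - |c|` points: for `|c| = 3` the pair is the
star of `c` at the common point, for `|c| = 4` it is the matching of `c` pairing a fixed vertex
`a` with its partner. Either way the pair is determined by a point of `c`. -/
theorem exists_colorClass_subset_image {e₀ e₀' : Edge} (hne : e₀ ≠ e₀')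
    (hc : (e₀ : Finset ℕ) ∪ e₀' = c) :
    ∃ g : ℕ → Set Edge, colorClass c ⊆ g '' c := by
  have hinter : ∀ e e' : Edge,
      (e : Finset ℕ) ∪ e' = c → ((e : Finset ℕ) ∩ e').card = 4 - c.card :=
    fun e e' h => by have := card_union_add_card_inter e e'; rw [h] at this; omega
  have h₀ := hinter e₀ e₀' hc
  rcases (by have := card_inter_le_one hne; omega : 4 - c.card = 1 ∨ 4 - c.card = 0) with h3 | h4
  · refine ⟨fun x => {f : Edge | (f : Finset ℕ) ⊆ c ∧ x ∈ (f : Finset ℕ)}, ?_⟩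
    rintro _ ⟨e, e', -, rfl, hc⟩
    obtain ⟨x, hx⟩ := Finset.card_eq_one.1 ((hinter e e' hc).trans h3)
    have hxe : x ∈ (e : Finset ℕ) :=
      Finset.mem_of_mem_inter_left (hx ▸ Finset.mem_singleton_self x)
    refine ⟨x, hc ▸ Finset.mem_union_left _ hxe, ?_⟩
    rw [pair_eq_setOf_of_inter_eq_singleton hx, hc]
  · obtain ⟨a, ha⟩ := e₀.nonempty
    refine ⟨fun x => {f : Edge | (f : Finset ℕ) = {a, x} ∨ (f : Finset ℕ) = c \ {a, x}},
      ?_⟩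
    rintro _ ⟨e, e', -, rfl, hc'⟩
    have hd : Disjoint (e : Finset ℕ) e' :=
      Finset.disjoint_iff_inter_eq_empty.2 (Finset.card_eq_zero.1 ((hinter e e' hc').trans h4))
    have ha' : a ∈ (e : Finset ℕ) ∪ e' := hc' ▸ hc ▸ Finset.mem_union_left _ ha
    wlog hae : a ∈ (e : Finset ℕ) generalizing e e'
    · rw [Set.pair_comm]
      exact this e' e (by rwa [Finset.union_comm]) hd.symm (by rwa [Finset.union_comm])
        ((Finset.mem_union.1 ha').resolve_left hae)
    obtain ⟨x, hx, hxa⟩ := exists_mem_ne e a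
    exact ⟨x, hc' ▸ Finset.mem_union_left _ hx,
      by rw [pair_eq_setOf_of_disjoint hd hae hx hxa, hc']⟩

theorem encard_colorClass_le (c : Finset ℕ) : (colorClass c).encard ≤ 4 := by
  rcases (colorClass c).eq_empty_or_nonempty with h | ⟨_, e, e', hne, -, hc⟩
  · simp [h]
  obtain ⟨g, hg⟩ := exists_colorClass_subset_image hne hc
  calc (colorClass c).encard ≤ (g '' c).encard := Set.encard_mono hg
    _ ≤ (c : Set ℕ).encard := Set.encard_image_le _ _
    _ = c.card := Set.encard_coe_eq_coe_finsetCard c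
    _ ≤ 4 := by
      rw [← hc]
      exact_mod_cast (Finset.card_union_le _ _).trans (by rw [e.2, e'.2])

/-- `B` is a clique of the graph `X`, i.e. `[B]² ⊆ X`. -/
def IsClique (X : Set Edge) (B : Finset ℕ) : Prop :=
  ∀ e : Edge, (e : Finset ℕ) ⊆ B → e ∈ X

/-- Vacuously true for `x = a`, where no edge `{a, x}` exists. -/
def Adj (X : Set Edge) (a x : ℕ) : Prop :=
  ∀ e : Edge, (e : Finset ℕ) = {a, x} → e ∈ X

theorem mem_edgeIdeal_iff :
    X ∈ edgeIdeal ↔ ∃ N, ∀ A : Finset ℕ, N ≤ A.card → ¬IsClique X A := by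
  simp [edgeIdeal, IsClique]

theorem IsClique.subset (hAB : A ⊆ B) (h : IsClique X B) : IsClique X A :=
  fun e he => h e (he.trans hAB)

theorem isClique_empty (X : Set Edge) : IsClique X ∅ :=
  fun e he => absurd (Finset.subset_empty.1 he) e.nonempty.ne_empty

theorem adj_or_adj_compl (X : Set Edge) (a x : ℕ) : Adj X a x ∨ Adj Xᶜ a x := by
  by_contra! h
  simp only [Adj, not_forall] at h
  obtain ⟨⟨e, he, heX⟩, e', he', he'X⟩ := h
  exact he'X ((Subtype.ext (he.trans he'.symm) : e = e') ▸ heX)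

theorem IsClique.insert (hB : IsClique X B) (ha : ∀ x ∈ B, Adj X a x) :
    IsClique X (insert a B) := by
  intro e he
  by_cases hae : a ∈ (e : Finset ℕ)
  · obtain ⟨x, hx, hxa⟩ := exists_mem_ne e a
    exact ha x ((Finset.mem_insert.1 (he hx)).resolve_left hxa) e (eq_pair e hae hx hxa.symm)
  · exact hB e ((Finset.subset_insert_iff_of_notMem hae).1 he)

theorem exists_isClique_insert {k : ℕ} [DecidablePred (Adj X a)] (ha : a ∈ A)
    (hB : B ⊆ (A.erase a).filter (Adj X a)) (hk : k ≤ B.card) (hX : IsClique X B) :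
    ∃ B' ⊆ A, k + 1 ≤ B'.card ∧ IsClique X B' := by
  have haB : a ∉ B := fun h => Finset.notMem_erase a A (Finset.mem_filter.1 (hB h)).1
  refine ⟨insert a B, Finset.insert_subset ha (hB.trans (Finset.filter_subset _ _) |>.trans
    (Finset.erase_subset a A)), by rw [Finset.card_insert_of_notMem haB]; omega,
    hX.insert fun x hx => (Finset.mem_filter.1 (hB hx)).2⟩

theorem exists_isClique_or_isClique_compl :
    ∀ m n : ℕ, ∃ R, ∀ (X : Set Edge) (A : Finset ℕ), R ≤ A.card →
    (∃ B ⊆ A, m ≤ B.card ∧ IsClique X B) ∨ (∃ B ⊆ A, n ≤ B.card ∧ IsClique Xᶜ B)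
  | 0, _ => ⟨0, fun X A _ => Or.inl ⟨∅, Finset.empty_subset A, le_rfl, isClique_empty X⟩⟩
  | _, 0 =>
    ⟨0, fun X A _ => Or.inr ⟨∅, Finset.empty_subset A, le_rfl, isClique_empty Xᶜ⟩⟩
  | m + 1, n + 1 => by
    classical
    obtain ⟨R₁, h₁⟩ := exists_isClique_or_isClique_compl m (n + 1)
    obtain ⟨R₂, h₂⟩ := exists_isClique_or_isClique_compl (m + 1) n
    refine ⟨R₁ + R₂ + 1, fun X A hA => ?_⟩
    obtain ⟨a, ha⟩ : A.Nonempty := Finset.card_pos.1 (by omega)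
    have hsub : ∀ p : ℕ → Prop, [DecidablePred p] → (A.erase a).filter p ⊆ A :=
      fun p _ => (Finset.filter_subset _ _).trans (Finset.erase_subset a A)
    have hsplit : R₁ ≤ ((A.erase a).filter (Adj X a)).card ∨
        R₂ ≤ ((A.erase a).filter (Adj Xᶜ a)).card := by
      have hcover :
          A.erase a ⊆ (A.erase a).filter (Adj X a) ∪ (A.erase a).filter (Adj Xᶜ a) :=
        fun x hx => by simpa [← Finset.filter_or, hx] using adj_or_adj_compl X a x
      have := (Finset.card_le_card hcover).trans (Finset.card_union_le _ _)
      rw [Finset.card_erase_of_mem ha] at this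
      omega
    rcases hsplit with h | h
    · rcases h₁ X _ h with ⟨B, hB, hm, hX⟩ | ⟨B, hB, hn, hX⟩
      · exact Or.inl (exists_isClique_insert ha hB hm hX)
      · exact Or.inr ⟨B, hB.trans (hsub _), hn, hX⟩
    · rcases h₂ X _ h with ⟨B, hB, hm, hX⟩ | ⟨B, hB, hn, hX⟩
      · exact Or.inl ⟨B, hB.trans (hsub _), hm, hX⟩
      · exact Or.inr (exists_isClique_insert ha hB hn hX)

theorem mem_edgeIdeal_of_finite (hX : X.Finite) : X ∈ edgeIdeal := by
  classical
  set V := hX.toFinset.biUnion Subtype.val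
  refine ⟨V.card + 2, fun A hA => ?_⟩
  obtain ⟨e, he⟩ := exists_subset ((Finset.le_card_sdiff V A).trans' (by omega))
  refine ⟨e, he.trans Finset.sdiff_subset, fun heX => ?_⟩
  obtain ⟨x, hx⟩ := e.nonempty
  exact (Finset.mem_sdiff.1 (he hx)).2 (Finset.mem_biUnion.2 ⟨e, hX.mem_toFinset.2 heX, hx⟩)

theorem mem_edgeIdeal_of_subset (hXY : X ⊆ Y) (hY : Y ∈ edgeIdeal) : X ∈ edgeIdeal :=
  let ⟨N, hN⟩ := hY
  ⟨N, fun A hA => let ⟨e, he, heY⟩ := hN A hA; ⟨e, he, fun heX => heY (hXY heX)⟩⟩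

theorem union_mem_edgeIdeal (hX : X ∈ edgeIdeal) (hY : Y ∈ edgeIdeal) :
    X ∪ Y ∈ edgeIdeal := by
  obtain ⟨N₁, hN₁⟩ := mem_edgeIdeal_iff.1 hX
  obtain ⟨N₂, hN₂⟩ := mem_edgeIdeal_iff.1 hY
  obtain ⟨R, hR⟩ := exists_isClique_or_isClique_compl N₁ N₂
  refine mem_edgeIdeal_iff.2 ⟨R, fun A hA hXY => ?_⟩
  rcases hR X A hA with ⟨B, -, hB, hXB⟩ | ⟨B, hBA, hB, hXB⟩
  · exact hN₁ B hB hXB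
  · exact hN₂ B hB fun e he => ((hXY.subset hBA) e he).resolve_left (hXB e he)

theorem univ_notMem_edgeIdeal : Set.univ ∉ edgeIdeal := fun ⟨N, hN⟩ =>
  let ⟨_, _, he⟩ := hN (Finset.range N) (by simp)
  he trivial

/-- A set of edges on which `χ({e, e'}) = e ∪ e'` is injective. -/
def IsPolychromatic (X : Set Edge) : Prop :=
  ∀ e e' f f' : Edge, e ∈ X → e' ∈ X → f ∈ X → f' ∈ X → e ≠ e' → f ≠ f' →
    (e : Finset ℕ) ∪ (e' : Finset ℕ) = (f : Finset ℕ) ∪ (f' : Finset ℕ) →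
    ({e, e'} : Set Edge) = {f, f'}

theorem exists_two_pairs_union_eq (hB : B.card = 4) :
    ∃ e e' f f' : Edge, (e : Finset ℕ) ∪ e' = B ∧ (f : Finset ℕ) ∪ f' = B ∧
      e ≠ e' ∧ f ≠ f' ∧ f ∉ ({e, e'} : Set Edge) := by
  obtain ⟨e, he⟩ := exists_subset (hB ▸ by norm_num : 2 ≤ B.card)
  obtain ⟨e', he'⟩ := exists_eq_sdiff hB he
  obtain ⟨x, hx⟩ := e.nonempty
  obtain ⟨y, hy⟩ := e'.nonempty
  rw [he', Finset.mem_sdiff] at hy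
  have hxy : x ≠ y := fun h => hy.2 (h ▸ hx)
  set f : Edge := ⟨{x, y}, Finset.card_pair hxy⟩
  have hf : (f : Finset ℕ) ⊆ B :=
    Finset.insert_subset (he hx) (Finset.singleton_subset_iff.2 hy.1)
  obtain ⟨f', hf'⟩ := exists_eq_sdiff hB hf
  have hxf : x ∈ (f : Finset ℕ) := Finset.mem_insert_self x {y}
  have hyf : y ∈ (f : Finset ℕ) := Finset.mem_insert_of_mem (Finset.mem_singleton_self y)
  have hxe' : x ∉ (e' : Finset ℕ) := by simp [he', hx]
  have hxf' : x ∉ (f' : Finset ℕ) := by simp [hf', hxf]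
  refine ⟨e, e', f, f', by rw [he', Finset.union_sdiff_of_subset he],
    by rw [hf', Finset.union_sdiff_of_subset hf], fun h => hxe' (h ▸ hx),
    fun h => hxf' (h ▸ hxf), ?_⟩
  rintro (h | h)
  exacts [hy.2 (h ▸ hyf), hxe' (h ▸ hxf)]

theorem mem_edgeIdeal_of_isPolychromatic (hX : IsPolychromatic X) : X ∈ edgeIdeal := by
  refine mem_edgeIdeal_iff.2 ⟨4, fun A hA hXA => ?_⟩
  obtain ⟨B, hBA, hB⟩ := Finset.exists_subset_card_eq hA
  obtain ⟨e, e', f, f', he, hf, hne, hfne, hfe⟩ := exists_two_pairs_union_eq hB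
  have hXB := hXA.subset hBA
  have heq := hX e e' f f' (hXB e (he ▸ Finset.subset_union_left))
    (hXB e' (he ▸ Finset.subset_union_right)) (hXB f (hf ▸ Finset.subset_union_left))
    (hXB f' (hf ▸ Finset.subset_union_right)) hne hfne (he.trans hf.symm)
  exact hfe (heq ▸ Set.mem_insert f {f'})

end Edge

/-- The coloring `χ({e,e'}) = e ∪ e'` of pairs of edges is 4-bounded, `edgeIdeal` is an ideal
on `[ℕ]²`, and every set of edges polychromatic for `χ` belongs to `edgeIdeal`. -/
theorem edge_coloring_ideal :
    -- (1) χ({e,e'}) = e ∪ e' is 4-bounded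
    (∀ c : Finset ℕ,
      {P : Set Edge | ∃ e e' : Edge, e ≠ e' ∧ P = {e, e'} ∧
        (e : Finset ℕ) ∪ (e' : Finset ℕ) = c}.encard ≤ 4) ∧
    -- (2) edgeIdeal is an ideal on [ℕ]²
    ((∀ X : Set Edge, X.Finite → X ∈ edgeIdeal) ∧
     (∀ X Y : Set Edge, X ⊆ Y → Y ∈ edgeIdeal → X ∈ edgeIdeal) ∧
     (∀ X Y : Set Edge, X ∈ edgeIdeal → Y ∈ edgeIdeal → X ∪ Y ∈ edgeIdeal) ∧
     (Set.univ : Set Edge) ∉ edgeIdeal) ∧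
    -- (3) every polychromatic set of edges belongs to edgeIdeal
    (∀ X : Set Edge,
      (∀ e e' f f' : Edge, e ∈ X → e' ∈ X → f ∈ X → f' ∈ X → e ≠ e' → f ≠ f' →
        (e : Finset ℕ) ∪ (e' : Finset ℕ) = (f : Finset ℕ) ∪ (f' : Finset ℕ) →
        ({e, e'} : Set Edge) = {f, f'}) →
      X ∈ edgeIdeal) :=
  ⟨Edge.encard_colorClass_le,
    ⟨fun _ => Edge.mem_edgeIdeal_of_finite, fun _ _ => Edge.mem_edgeIdeal_of_subset,
      fun _ _ => Edge.union_mem_edgeIdeal, Edge.univ_notMem_edgeIdeal⟩,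
    fun _ => Edge.mem_edgeIdeal_of_isPolychromatic⟩
end

section
/- Let I be the collection of all X ⊆ [ℕ]² for which there exists N ∈ ℕ such that for every A ⊆ ℕ with |A| ≥ N, [A]² is not a subset of X. Suppose X ⊆ [ℕ]² with X ∉ I, and let P = {Pₙ : n ∈ ℕ} be a partition of [ℕ]² into countably many pieces. Then either X ∩ Pₙ ∉ I for some n, or there exists Y ⊆ X with Y ∉ I such that Y ∩ Pₙ is finite for every n. -/
open Classical in
/-- Finite Ramsey, 2 colors, with fuel. -/
lemma ramsey2_aux : ∀ n s t : ℕ, s + t ≤ n → ∃ R : ℕ, ∀ (f : ℕ → ℕ → Bool) (A : Finset ℕ),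
    R ≤ A.card → ∃ B ⊆ A,
      (s ≤ B.card ∧ ∀ a ∈ B, ∀ b ∈ B, a < b → f a b = true) ∨
      (t ≤ B.card ∧ ∀ a ∈ B, ∀ b ∈ B, a < b → f a b = false) := by
  intro n
  induction n with
  | zero =>
    intro s t hst
    refine ⟨0, fun f A _ => ⟨∅, Finset.empty_subset _, Or.inl ?_⟩⟩
    simp; omega
  | succ n ih =>
    intro s t hst
    match s, t with
    | 0, t => exact ⟨0, fun f A _ => ⟨∅, Finset.empty_subset _, Or.inl (by simp)⟩⟩
    | s+1, 0 => exact ⟨0, fun f A _ => ⟨∅, Finset.empty_subset _, Or.inr (by simp)⟩⟩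
    | s+1, t+1 =>
      obtain ⟨R₁, hR₁⟩ := ih s (t + 1) (by omega)
      obtain ⟨R₂, hR₂⟩ := ih (s + 1) t (by omega)
      refine ⟨R₁ + R₂ + 1, fun f A hA => ?_⟩
      have hne : A.Nonempty := Finset.card_pos.mp (by omega)
      set x := A.min' hne with hx
      set A' := A.erase x with hA'
      have hcardA' : R₁ + R₂ ≤ A'.card := by
        rw [hA', Finset.card_erase_of_mem (A.min'_mem hne)]
        omega
      set At := A'.filter (fun y => f x y = true) with hAt
      set Af := A'.filter (fun y => ¬(f x y = true)) with hAf
      have hsplit : At.card + Af.card = A'.card :=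
        Finset.card_filter_add_card_filter_not _
      rcases le_or_gt R₁ At.card with hbig | hsmall
      · obtain ⟨B, hBsub, hB⟩ := hR₁ f At hbig
        have hBA' : B ⊆ A' := hBsub.trans (Finset.filter_subset _ _)
        rcases hB with ⟨hcard, hcl⟩ | ⟨hcard, hcl⟩
        · refine ⟨insert x B, ?_, Or.inl ⟨?_, ?_⟩⟩
          · exact Finset.insert_subset (A.min'_mem hne)
              (hBA'.trans (Finset.erase_subset _ _))
          · have hxB : x ∉ B := fun h => (Finset.mem_erase.mp (hBA' h)).1 rfl
            rw [Finset.card_insert_of_notMem hxB]; omega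
          · intro a ha b hb hab
            rcases Finset.mem_insert.mp hb with hbx | hb
            · rcases Finset.mem_insert.mp ha with hax | ha
              · omega
              · have : x ≤ a := A.min'_le a ((hBA'.trans (Finset.erase_subset _ _)) ha)
                omega
            · rcases Finset.mem_insert.mp ha with hax | ha
              · rw [hax]
                exact (Finset.mem_filter.mp (hBsub hb)).2
              · exact hcl a ha b hb hab
        · exact ⟨B, hBA'.trans (Finset.erase_subset _ _), Or.inr ⟨hcard, hcl⟩⟩
      · have hbig2 : R₂ ≤ Af.card := by omega
        obtain ⟨B, hBsub, hB⟩ := hR₂ f Af hbig2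
        have hBA' : B ⊆ A' := hBsub.trans (Finset.filter_subset _ _)
        rcases hB with ⟨hcard, hcl⟩ | ⟨hcard, hcl⟩
        · exact ⟨B, hBA'.trans (Finset.erase_subset _ _), Or.inl ⟨hcard, hcl⟩⟩
        · refine ⟨insert x B, ?_, Or.inr ⟨?_, ?_⟩⟩
          · exact Finset.insert_subset (A.min'_mem hne)
              (hBA'.trans (Finset.erase_subset _ _))
          · have hxB : x ∉ B := fun h => (Finset.mem_erase.mp (hBA' h)).1 rfl
            rw [Finset.card_insert_of_notMem hxB]; omega
          · intro a ha b hb hab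
            rcases Finset.mem_insert.mp hb with hbx | hb
            · rcases Finset.mem_insert.mp ha with hax | ha
              · omega
              · have : x ≤ a := A.min'_le a ((hBA'.trans (Finset.erase_subset _ _)) ha)
                omega
            · rcases Finset.mem_insert.mp ha with hax | ha
              · rw [hax]
                have := (Finset.mem_filter.mp (hBsub hb)).2
                simpa using this
              · exact hcl a ha b hb hab

lemma ramsey2 (s t : ℕ) : ∃ R : ℕ, ∀ (f : ℕ → ℕ → Bool) (A : Finset ℕ),
    R ≤ A.card → ∃ B ⊆ A,
      (s ≤ B.card ∧ ∀ a ∈ B, ∀ b ∈ B, a < b → f a b = true) ∨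
      (t ≤ B.card ∧ ∀ a ∈ B, ∀ b ∈ B, a < b → f a b = false) :=
  ramsey2_aux (s + t) s t le_rfl

/-- The edge with endpoints `a ≠ b`. -/
def pairEdge (a b : ℕ) (h : a ≠ b) : Edge := ⟨{a, b}, Finset.card_pair h⟩

lemma edge_elems (e : Edge) : ∃ a b, a < b ∧ (e : Finset ℕ) = {a, b} := by
  obtain ⟨a, b, hab, he⟩ := Finset.card_eq_two.mp e.2
  rcases lt_or_gt_of_ne hab with h | h
  · exact ⟨a, b, h, he⟩
  · exact ⟨b, a, h, by rw [he, Finset.pair_comm]⟩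

lemma edgeIdeal_mono {Y Z : Set Edge} (h : Y ⊆ Z) (hZ : Z ∈ edgeIdeal) : Y ∈ edgeIdeal := by
  obtain ⟨N, hN⟩ := hZ
  exact ⟨N, fun A hA => by obtain ⟨e, he, heZ⟩ := hN A hA; exact ⟨e, he, fun hY => heZ (h hY)⟩⟩

lemma edgeIdeal_union {Z₁ Z₂ : Set Edge} (h1 : Z₁ ∈ edgeIdeal) (h2 : Z₂ ∈ edgeIdeal) :
    Z₁ ∪ Z₂ ∈ edgeIdeal := by
  classical
  obtain ⟨N₁, hN₁⟩ := h1
  obtain ⟨N₂, hN₂⟩ := h2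
  obtain ⟨R, hR⟩ := ramsey2 N₁ N₂
  refine ⟨R, fun A hA => ?_⟩
  by_contra hcon
  push_neg at hcon
  obtain ⟨B, hBA, hB⟩ := hR
    (fun a b => if h : a < b then decide (pairEdge a b h.ne ∈ Z₁) else false) A hA
  rcases hB with ⟨hcard, hcl⟩ | ⟨hcard, hcl⟩
  · obtain ⟨e, heB, heZ⟩ := hN₁ B hcard
    obtain ⟨a, b, hab, habe⟩ := edge_elems e
    have ha : a ∈ B := heB (by rw [habe]; simp)
    have hb : b ∈ B := heB (by rw [habe]; simp)
    have := hcl a ha b hb hab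
    rw [dif_pos hab] at this
    have : pairEdge a b hab.ne ∈ Z₁ := by simpa using this
    exact heZ (by rwa [show e = pairEdge a b hab.ne from Subtype.ext habe])
  · obtain ⟨e, heB, heZ⟩ := hN₂ B hcard
    obtain ⟨a, b, hab, habe⟩ := edge_elems e
    have ha : a ∈ B := heB (by rw [habe]; simp)
    have hb : b ∈ B := heB (by rw [habe]; simp)
    have hf := hcl a ha b hb hab
    rw [dif_pos hab] at hf
    have hnot1 : pairEdge a b hab.ne ∉ Z₁ := by simpa using hf
    have hmem : pairEdge a b hab.ne ∈ Z₁ ∪ Z₂ :=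
      hcon (pairEdge a b hab.ne) (by rw [show ((pairEdge a b hab.ne : Edge) : Finset ℕ) = {a,b} from rfl]; exact Finset.insert_subset (hBA ha) (by simpa using hBA hb))
    have : pairEdge a b hab.ne ∈ Z₂ := hmem.resolve_left hnot1
    exact heZ (by rwa [show e = pairEdge a b hab.ne from Subtype.ext habe])

lemma edgeIdeal_biUnion (Z : ℕ → Set Edge) (k : ℕ) (h : ∀ n ≤ k, Z n ∈ edgeIdeal) :
    {e : Edge | ∃ n ≤ k, e ∈ Z n} ∈ edgeIdeal := by
  induction k with
  | zero =>
    have : {e : Edge | ∃ n ≤ 0, e ∈ Z n} = Z 0 := by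
      ext e; simp
    rw [this]; exact h 0 le_rfl
  | succ k ih =>
    have : {e : Edge | ∃ n ≤ k + 1, e ∈ Z n} = {e : Edge | ∃ n ≤ k, e ∈ Z n} ∪ Z (k + 1) := by
      ext e
      simp only [Set.mem_setOf_eq, Set.mem_union]
      constructor
      · rintro ⟨n, hn, he⟩
        rcases Nat.lt_or_ge n (k + 1) with h' | h'
        · exact Or.inl ⟨n, by omega, he⟩
        · exact Or.inr (by rwa [show n = k + 1 by omega] at he)
      · rintro (⟨n, hn, he⟩ | he)
        · exact ⟨n, by omega, he⟩
        · exact ⟨k + 1, le_rfl, he⟩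
    rw [this]
    exact edgeIdeal_union (ih fun n hn => h n (by omega)) (h (k + 1) le_rfl)

lemma edges_in_finset_finite (s : Finset ℕ) : {e : Edge | (e : Finset ℕ) ⊆ s}.Finite := by
  have : {e : Edge | (e : Finset ℕ) ⊆ s} =
      (fun e : Edge => (e : Finset ℕ)) ⁻¹' ↑s.powerset := by
    ext e; simp
  rw [this]
  exact Set.Finite.preimage Subtype.coe_injective.injOn (s.powerset.finite_toSet)

theorem weak_selecter_lemma' (X : Set Edge) (hX : X ∉ edgeIdeal)
    (P : ℕ → Set Edge)
    (hall : ∀ n, X ∩ P n ∈ edgeIdeal) :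
    (∃ Y : Set Edge, Y ⊆ X ∧ Y ∉ edgeIdeal ∧ ∀ n, (Y ∩ P n).Finite) := by
  -- for each k, a big clique in X avoiding P 0, ..., P k
  have key : ∀ k : ℕ, ∃ B : Finset ℕ, k ≤ B.card ∧
      ∀ e : Edge, (e : Finset ℕ) ⊆ B → e ∈ X ∧ ∀ n ≤ k, e ∉ P n := by
    intro k
    set X' : Set Edge := X \ {e | ∃ n ≤ k, e ∈ P n} with hX'
    have hX'ni : X' ∉ edgeIdeal := by
      intro hmem
      apply hX
      have hsub : X ⊆ X' ∪ {e : Edge | ∃ n ≤ k, e ∈ X ∩ P n} := by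
        intro e he
        by_cases h : ∃ n ≤ k, e ∈ P n
        · exact Or.inr (by obtain ⟨n, hn, hp⟩ := h; exact ⟨n, hn, he, hp⟩)
        · exact Or.inl ⟨he, h⟩
      exact edgeIdeal_mono hsub
        (edgeIdeal_union hmem (edgeIdeal_biUnion _ k (fun n _ => hall n)))
    simp only [edgeIdeal, Set.mem_setOf_eq, not_exists, not_forall] at hX'ni
    obtain ⟨B, hBcard, hB⟩ := hX'ni k
    push_neg at hB
    refine ⟨B, hBcard, fun e he => ?_⟩
    have := hB e he
    simp only [hX', Set.mem_diff, Set.mem_setOf_eq, not_exists] at this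
    exact ⟨this.1, fun n hn hp => this.2 n ⟨hn, hp⟩⟩
  choose B hBcard hB using key
  refine ⟨{e : Edge | ∃ k, (e : Finset ℕ) ⊆ B k}, ?_, ?_, ?_⟩
  · rintro e ⟨k, hk⟩
    exact (hB k e hk).1
  · intro hmem
    obtain ⟨N, hN⟩ := hmem
    obtain ⟨e, heB, heY⟩ := hN (B N) (hBcard N)
    exact heY ⟨N, heB⟩
  · intro n
    apply Set.Finite.subset (Set.Finite.biUnion (Set.finite_Iio n)
      (fun k _ => edges_in_finset_finite (B k)))
    rintro e ⟨⟨k, hk⟩, hp⟩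
    have hkn : k < n := by
      by_contra h
      push_neg at h
      exact (hB k e hk).2 n h hp
    exact Set.mem_biUnion hkn hk

/-- If `X ∉ edgeIdeal` and `P` is a countable partition of `[ℕ]²`, then either some `X ∩ Pₙ`
is outside the ideal, or there is `Y ⊆ X` outside the ideal which is a weak `P`-selecter. -/
theorem weak_selecter_lemma (X : Set Edge) (hX : X ∉ edgeIdeal)
    (P : ℕ → Set Edge) (hdisj : ∀ m n, m ≠ n → Disjoint (P m) (P n))
    (hcover : (⋃ n, P n) = Set.univ) :
    (∃ n, X ∩ P n ∉ edgeIdeal) ∨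
    (∃ Y : Set Edge, Y ⊆ X ∧ Y ∉ edgeIdeal ∧ ∀ n, (Y ∩ P n).Finite) := by
  by_cases h : ∃ n, X ∩ P n ∉ edgeIdeal
  · exact Or.inl h
  · push_neg at h
    exact Or.inr (weak_selecter_lemma' X hX P h)
end

section
/- Let S ⊆ ℝ be a countable set. Then there is a 2-bounded coloring χ : [S]² → C such that every A ⊆ S that is polychromatic for χ is nowhere dense as a subset of ℝ. -/
open Set MeasureTheory

namespace PolyNWD

/-- Specification of the interval chosen at stage `n` of the recursion.
If `n` is the code of a pair `(a,c) ∈ Q`, the chosen interval `v` must be a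
nondegenerate interval inside the middle third of `(a,c)`, be very short,
and have closure disjoint from the intervals of all previously treated pairs
that share an endpoint with `(a,c)`. -/
def Spec (Q : Set (ℝ × ℝ)) (ι : ℝ × ℝ → ℕ) (n : ℕ) (prev : ℕ → ℝ × ℝ) (v : ℝ × ℝ) : Prop :=
  ∀ a c : ℝ, (a, c) ∈ Q → ι (a, c) = n →
    v.1 < v.2 ∧ a + (c - a) / 3 ≤ v.1 ∧ v.2 ≤ c - (c - a) / 3 ∧
      v.2 - v.1 ≤ (c - a) * (1 / 8 : ℝ) ^ n / 100 ∧
      ∀ a' c' : ℝ, (a', c') ∈ Q → (a', c') ≠ (a, c) →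
        (a' = a ∨ a' = c ∨ c' = a ∨ c' = c) → ι (a', c') < n →
          Icc v.1 v.2 ∩ Icc (prev (ι (a', c'))).1 (prev (ι (a', c'))).2 = ∅

lemma spec_congr {Q : Set (ℝ × ℝ)} {ι : ℝ × ℝ → ℕ} {n : ℕ} {prev prev' : ℕ → ℝ × ℝ}
    {v : ℝ × ℝ} (h : ∀ k, k < n → prev k = prev' k) (hs : Spec Q ι n prev v) :
    Spec Q ι n prev' v := by
  intro a c hq hn
  obtain ⟨h1, h2, h3, h4, h5⟩ := hs a c hq hn
  exact ⟨h1, h2, h3, h4, fun a' c' hq' hne ht hlt => by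
    rw [← h _ hlt]; exact h5 a' c' hq' hne ht hlt⟩

lemma exists_spec (Q : Set (ℝ × ℝ)) (ι : ℝ × ℝ → ℕ) (hQlt : ∀ q ∈ Q, q.1 < q.2)
    (hι : Set.InjOn ι Q) (n : ℕ) (prev : ℕ → ℝ × ℝ)
    (H : ∀ m, m < n → Spec Q ι m prev (prev m)) : ∃ v, Spec Q ι n prev v := by
  classical
  by_cases hn : ∃ a c : ℝ, (a, c) ∈ Q ∧ ι (a, c) = n
  · obtain ⟨a, c, hac, hcode⟩ := hn
    have hd : (0:ℝ) < c - a := sub_pos.mpr (hQlt _ hac)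
    set T : Set ℝ := Ioo (a + (c-a)/3) (c - (c-a)/3) with hTdef
    set W : ℕ → Set ℝ := fun m =>
      {x | (∃ a' c' : ℝ, (a', c') ∈ Q ∧ (a', c') ≠ (a, c) ∧
        (a' = a ∨ a' = c ∨ c' = a ∨ c' = c) ∧ ι (a', c') = m) ∧
        x ∈ Icc (prev m).1 (prev m).2} with hWdef
    have Wclosed : ∀ m, IsClosed (W m) := by
      intro m
      by_cases h : (∃ a' c' : ℝ, (a', c') ∈ Q ∧ (a', c') ≠ (a, c) ∧
        (a' = a ∨ a' = c ∨ c' = a ∨ c' = c) ∧ ι (a', c') = m)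
      · have hW : W m = Icc (prev m).1 (prev m).2 := by
          ext x; exact ⟨fun hx => hx.2, fun hx => ⟨h, hx⟩⟩
        rw [hW]; exact isClosed_Icc
      · have hW : W m = ∅ := by
          ext x; exact ⟨fun hx => (h hx.1).elim, fun hx => hx.elim⟩
        rw [hW]; exact isClosed_empty
    have keyvol : ∀ m, m < n →
        volume (W m ∩ T) ≤ ENNReal.ofReal (2*(c-a)/100 * (1/2:ℝ)^m) := by
      intro m hm
      rcases Set.eq_empty_or_nonempty (W m ∩ T) with he | ⟨x, hxW, hxT⟩
      · rw [he]; simp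
      · obtain ⟨⟨a', c', hq', hne', ht', hcode'⟩, hxI⟩ := hxW
        have hd' : (0:ℝ) < c' - a' := sub_pos.mpr (hQlt _ hq')
        obtain ⟨h1', h2', h3', h4', -⟩ := H m hm a' c' hq' hcode'
        have hTx1 : a + (c-a)/3 < x := hxT.1
        have hTx2 : x < c - (c-a)/3 := hxT.2
        have hIx1 : (prev m).1 ≤ x := hxI.1
        have hIx2 : x ≤ (prev m).2 := hxI.2
        have hdle : c' - a' ≤ 2*(c-a) := by
          rcases ht' with h | h | h | h
          · subst h; linarith
          · exfalso; subst h; linarith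
          · exfalso; subst h; linarith
          · subst h; linarith
        have hsub : W m ∩ T ⊆ Icc (prev m).1 (prev m).2 := fun y hy => hy.1.2
        calc volume (W m ∩ T) ≤ volume (Icc (prev m).1 (prev m).2) := measure_mono hsub
          _ = ENNReal.ofReal ((prev m).2 - (prev m).1) := Real.volume_Icc
          _ ≤ ENNReal.ofReal (2*(c-a)/100 * (1/2:ℝ)^m) := by
              apply ENNReal.ofReal_le_ofReal
              have h8 : ((1:ℝ)/8)^m ≤ ((1:ℝ)/2)^m :=
                pow_le_pow_left₀ (by norm_num) (by norm_num) m
              have hmul : (c' - a') * ((1:ℝ)/8)^m ≤ (2*(c-a)) * ((1:ℝ)/2)^m :=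
                mul_le_mul hdle h8 (pow_nonneg (by norm_num) m) (by linarith)
              linarith
    have hptex : ∃ pt, pt ∈ T ∧ ∀ m, m < n → pt ∉ W m := by
      by_contra hcon
      push_neg at hcon
      have hcov : T ⊆ ⋃ m ∈ Finset.range n, (W m ∩ T) := by
        intro x hx
        obtain ⟨m, hm, hxm⟩ := hcon x hx
        exact mem_biUnion (Finset.mem_range.mpr hm) ⟨hxm, hx⟩
      have h1 : volume T ≤ ∑ m ∈ Finset.range n, volume (W m ∩ T) :=
        (measure_mono hcov).trans (measure_biUnion_finset_le _ _)
      have h2 : ∑ m ∈ Finset.range n, volume (W m ∩ T)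
          ≤ ∑ m ∈ Finset.range n, ENNReal.ofReal (2*(c-a)/100 * (1/2:ℝ)^m) :=
        Finset.sum_le_sum fun m hm => keyvol m (Finset.mem_range.mp hm)
      have h3 : ∑ m ∈ Finset.range n, ENNReal.ofReal (2*(c-a)/100 * (1/2:ℝ)^m)
          = ENNReal.ofReal (∑ m ∈ Finset.range n, 2*(c-a)/100 * (1/2:ℝ)^m) := by
        rw [ENNReal.ofReal_sum_of_nonneg]
        intro m _; positivity
      have h4 : (∑ m ∈ Finset.range n, 2*(c-a)/100 * (1/2:ℝ)^m) ≤ (c-a)/25 := by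
        rw [← Finset.mul_sum]
        have hg := sum_geometric_two_le n
        nlinarith
      have h5 : volume T = ENNReal.ofReal ((c-a)/3) := by
        rw [hTdef, Real.volume_Ioo]; congr 1; ring
      have h6 : ENNReal.ofReal ((c-a)/3) ≤ ENNReal.ofReal ((c-a)/25) := by
        rw [h5] at h1
        refine h1.trans (h2.trans ?_)
        rw [h3]
        exact ENNReal.ofReal_le_ofReal h4
      rw [ENNReal.ofReal_le_ofReal_iff (by positivity)] at h6
      linarith
    obtain ⟨pt, hptT, hptW⟩ := hptex
    have hUopen : IsOpen (T \ ⋃ m ∈ Finset.range n, W m) := by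
      apply IsOpen.sdiff isOpen_Ioo
      exact (Finset.range n).finite_toSet.isClosed_biUnion fun m _ => Wclosed m
    have hptU : pt ∈ T \ ⋃ m ∈ Finset.range n, W m := by
      refine ⟨hptT, ?_⟩
      intro hmem
      simp only [mem_iUnion] at hmem
      obtain ⟨m, hm, hxm⟩ := hmem
      exact hptW m (Finset.mem_range.mp hm) hxm
    obtain ⟨ε, hε, hball⟩ := Metric.isOpen_iff.mp hUopen pt hptU
    rw [Real.ball_eq_Ioo] at hball
    set δ : ℝ := min (ε/2) ((c-a) * (1/8:ℝ)^n / 200) with hδdef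
    have hδpos : 0 < δ := lt_min (by linarith) (by positivity)
    have hδε : δ < ε := lt_of_le_of_lt (min_le_left _ _) (by linarith)
    have hIccsub : Icc (pt - δ) (pt + δ) ⊆ T \ ⋃ m ∈ Finset.range n, W m := by
      intro y hy
      apply hball
      exact ⟨by linarith [hy.1], by linarith [hy.2]⟩
    refine ⟨(pt - δ, pt + δ), ?_⟩
    intro a₀ c₀ hq₀ hcode₀
    have heq : (a₀, c₀) = (a, c) := hι hq₀ hac (by rw [hcode₀, hcode])
    have ha₀ : a₀ = a := congrArg Prod.fst heq
    have hc₀ : c₀ = c := congrArg Prod.snd heq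
    rw [ha₀, hc₀]
    have hmem1 : (pt - δ) ∈ T := (hIccsub ⟨le_refl _, by linarith⟩).1
    have hmem2 : (pt + δ) ∈ T := (hIccsub ⟨by linarith, le_refl _⟩).1
    refine ⟨by simp only; linarith, le_of_lt hmem1.1, le_of_lt hmem2.2, ?_, ?_⟩
    · simp only
      have := min_le_right (ε/2) ((c-a) * (1/8:ℝ)^n / 200)
      linarith
    · intro a' c' hq' hne ht hlt
      rw [Set.eq_empty_iff_forall_notMem]
      rintro x ⟨hx1, hx2⟩
      have hxU := hIccsub hx1
      apply hxU.2
      apply mem_biUnion (Finset.mem_range.mpr hlt)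
      exact ⟨⟨a', c', hq', hne, ht, rfl⟩, hx2⟩
  · exact ⟨(0,0), fun a c hq hc => absurd ⟨a, c, hq, hc⟩ hn⟩

noncomputable def chain (Q : Set (ℝ × ℝ)) (ι : ℝ × ℝ → ℕ) (hQlt : ∀ q ∈ Q, q.1 < q.2)
    (hι : Set.InjOn ι Q) : (n : ℕ) → {g : ℕ → ℝ × ℝ // ∀ m, m < n → Spec Q ι m g (g m)} :=
  @Nat.rec (fun n => {g : ℕ → ℝ × ℝ // ∀ m, m < n → Spec Q ι m g (g m)})
    ⟨fun _ => (0, 0), fun m hm => absurd hm (Nat.not_lt_zero m)⟩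
    (fun n p =>
      let he := exists_spec Q ι hQlt hι n p.1 p.2
      ⟨Function.update p.1 n he.choose, by
        intro m hm
        have hv := he.choose_spec
        rcases Nat.lt_succ_iff_lt_or_eq.mp hm with h | h
        · have hupd : Function.update p.1 n he.choose m = p.1 m :=
            Function.update_of_ne (by omega) _ _
          rw [hupd]
          exact spec_congr (fun k hk => (Function.update_of_ne (by omega) _ _).symm)
            (p.2 m h)
        · subst h
          rw [Function.update_self]
          exact spec_congr (fun k hk => (Function.update_of_ne (by omega) _ _).symm) hv⟩)

noncomputable def Jv (Q : Set (ℝ × ℝ)) (ι : ℝ × ℝ → ℕ) (hQlt : ∀ q ∈ Q, q.1 < q.2)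
    (hι : Set.InjOn ι Q) : ℕ → ℝ × ℝ := fun m => (chain Q ι hQlt hι (m + 1)).1 m

lemma chain_agree (Q : Set (ℝ × ℝ)) (ι : ℝ × ℝ → ℕ) (hQlt : ∀ q ∈ Q, q.1 < q.2)
    (hι : Set.InjOn ι Q) : ∀ n m, m < n →
    (chain Q ι hQlt hι n).1 m = Jv Q ι hQlt hι m := by
  intro n
  induction n with
  | zero => intro m hm; omega
  | succ n ih =>
    intro m hm
    rcases Nat.lt_succ_iff_lt_or_eq.mp hm with h | h
    · have hupd : (chain Q ι hQlt hι (n+1)).1 m = (chain Q ι hQlt hι n).1 m :=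
        Function.update_of_ne (by omega) _ _
      rw [hupd]; exact ih m h
    · subst h; rfl

lemma specJ (Q : Set (ℝ × ℝ)) (ι : ℝ × ℝ → ℕ) (hQlt : ∀ q ∈ Q, q.1 < q.2)
    (hι : Set.InjOn ι Q) (m : ℕ) :
    Spec Q ι m (Jv Q ι hQlt hι) (Jv Q ι hQlt hι m) := by
  have h := (chain Q ι hQlt hι (m + 1)).2 m (Nat.lt_succ_self m)
  exact spec_congr (fun k hk => chain_agree Q ι hQlt hι (m+1) k (by omega)) h

/-- The "middle witness" relation: `z` lies in the interval assigned to the pair `(a,c)`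
and was enumerated after both `a` and `c`. -/
def Mid (S : Set ℝ) (σ : ℝ → ℕ) (Q : Set (ℝ × ℝ)) (ι : ℝ × ℝ → ℕ) (JJ : ℕ → ℝ × ℝ)
    (a z c : ℝ) : Prop :=
  (a, c) ∈ Q ∧ z ∈ S ∧ (JJ (ι (a, c))).1 < z ∧ z < (JJ (ι (a, c))).2 ∧
    σ a < σ z ∧ σ c < σ z

open scoped Classical in
/-- The coloring: the pairs `{a,z}` and `{z,c}` both get color `inl (a,z,c)` when
`Mid a z c` holds; all other pairs get their own color. -/
noncomputable def chi (S : Set ℝ) (σ : ℝ → ℕ) (Q : Set (ℝ × ℝ)) (ι : ℝ × ℝ → ℕ)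
    (JJ : ℕ → ℝ × ℝ) (u v : ℝ) : (ℝ × ℝ × ℝ) ⊕ (ℝ × ℝ) :=
  if h1 : ∃ x, Mid S σ Q ι JJ u v x then Sum.inl (u, v, h1.choose)
  else if h2 : ∃ x, Mid S σ Q ι JJ x u v then Sum.inl (h2.choose, u, v)
  else Sum.inr (u, v)

end PolyNWD

open Set PolyNWD in
/-- For every countable `S ⊆ ℝ` there is a 2-bounded coloring of the pairs from `S` such
that every polychromatic subset of `S` is nowhere dense in `ℝ`. -/
theorem polychromatic_nowhereDense (S : Set ℝ) (hS : S.Countable) :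
    ∃ (C : Type) (χ : ℝ → ℝ → C),
      (∀ c : C, {p : ℝ × ℝ | p.1 ∈ S ∧ p.2 ∈ S ∧ p.1 < p.2 ∧ χ p.1 p.2 = c}.encard ≤ 2) ∧
      ∀ A : Set ℝ, A ⊆ S →
        (∀ a b c d : ℝ, a ∈ A → b ∈ A → c ∈ A → d ∈ A → a < b → c < d →
          χ a b = χ c d → a = c ∧ b = d) →
        IsNowhereDense A := by
  classical
  obtain ⟨f₀, hf₀⟩ := Set.countable_iff_exists_injective.mp hS
  set σ : ℝ → ℕ := fun x => if h : x ∈ S then f₀ ⟨x, h⟩ else 0 with hσdef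
  have hσ : Set.InjOn σ S := by
    intro x hx y hy hxy
    simp only [hσdef, dif_pos hx, dif_pos hy] at hxy
    exact congrArg Subtype.val (hf₀ hxy)
  set Q : Set (ℝ × ℝ) := {p | p.1 ∈ S ∧ p.2 ∈ S ∧ p.1 < p.2} with hQdef
  have hQc : Q.Countable :=
    Set.Countable.mono (fun p hp => Set.mem_prod.mpr ⟨hp.1, hp.2.1⟩) (hS.prod hS)
  obtain ⟨fQ, hfQ⟩ := Set.countable_iff_exists_injective.mp hQc
  set ι : ℝ × ℝ → ℕ := fun p => if h : p ∈ Q then fQ ⟨p, h⟩ else 0 with hιdef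
  have hι : Set.InjOn ι Q := by
    intro p hp q hq hpq
    simp only [hιdef, dif_pos hp, dif_pos hq] at hpq
    exact congrArg Subtype.val (hfQ hpq)
  have hQlt : ∀ q ∈ Q, q.1 < q.2 := fun q hq => hq.2.2
  -- Extract the interval assignment and its two key properties.
  obtain ⟨JJ, hbounds, hdisjIcc⟩ : ∃ JJ : ℕ → ℝ × ℝ,
      (∀ a c : ℝ, (a, c) ∈ Q →
        (JJ (ι (a, c))).1 < (JJ (ι (a, c))).2 ∧
        a + (c - a) / 3 ≤ (JJ (ι (a, c))).1 ∧
        (JJ (ι (a, c))).2 ≤ c - (c - a) / 3) ∧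
      (∀ a c a' c' : ℝ, (a, c) ∈ Q → (a', c') ∈ Q → (a', c') ≠ (a, c) →
        (a' = a ∨ a' = c ∨ c' = a ∨ c' = c) →
        Icc (JJ (ι (a, c))).1 (JJ (ι (a, c))).2 ∩
          Icc (JJ (ι (a', c'))).1 (JJ (ι (a', c'))).2 = ∅) := by
    refine ⟨Jv Q ι hQlt hι, ?_, ?_⟩
    · intro a c hq
      obtain ⟨h1, h2, h3, -, -⟩ := specJ Q ι hQlt hι (ι (a, c)) a c hq rfl
      exact ⟨h1, h2, h3⟩
    · intro a c a' c' hq hq' hne ht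
      have hcne : ι (a', c') ≠ ι (a, c) := fun hEq => hne (hι hq' hq hEq)
      rcases hcne.lt_or_gt with h | h
      · exact (specJ Q ι hQlt hι (ι (a, c)) a c hq rfl).2.2.2.2 a' c' hq' hne ht h
      · have ht' : a = a' ∨ a = c' ∨ c = a' ∨ c = c' := by
          rcases ht with h' | h' | h' | h'
          · exact Or.inl h'.symm
          · exact Or.inr (Or.inr (Or.inl h'.symm))
          · exact Or.inr (Or.inl h'.symm)
          · exact Or.inr (Or.inr (Or.inr h'.symm))
        have := (specJ Q ι hQlt hι (ι (a', c')) a' c' hq' rfl).2.2.2.2 a c hq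
          (fun hEq => hne hEq.symm) ht' h
        rw [Set.inter_comm] at this
        exact this
  -- pointwise disjointness
  have disj : ∀ a c a' c' x : ℝ, (a, c) ∈ Q → (a', c') ∈ Q → (a', c') ≠ (a, c) →
      (a' = a ∨ a' = c ∨ c' = a ∨ c' = c) →
      (JJ (ι (a, c))).1 ≤ x → x ≤ (JJ (ι (a, c))).2 →
      (JJ (ι (a', c'))).1 ≤ x → x ≤ (JJ (ι (a', c'))).2 → False := by
    intro a c a' c' x hq hq' hne ht h1 h2 h3 h4
    have hx : x ∈ Icc (JJ (ι (a, c))).1 (JJ (ι (a, c))).2 ∩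
        Icc (JJ (ι (a', c'))).1 (JJ (ι (a', c'))).2 := ⟨⟨h1, h2⟩, ⟨h3, h4⟩⟩
    rw [hdisjIcc a c a' c' hq hq' hne ht] at hx
    exact hx
  -- computation lemmas for chi
  have chiu : ∀ u v x : ℝ, Mid S σ Q ι JJ u v x →
      chi S σ Q ι JJ u v = Sum.inl (u, v, x) := by
    intro u v x hm
    have h1 : ∃ y, Mid S σ Q ι JJ u v y := ⟨x, hm⟩
    have hch := h1.choose_spec
    have hx : h1.choose = x := by
      by_contra hne
      have hpairne : (u, h1.choose) ≠ (u, x) := fun h => hne (congrArg Prod.snd h)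
      exact disj u x u h1.choose v hm.1 hch.1 hpairne (Or.inl rfl)
        (le_of_lt hm.2.2.1) (le_of_lt hm.2.2.2.1)
        (le_of_lt hch.2.2.1) (le_of_lt hch.2.2.2.1)
    rw [chi, dif_pos h1, hx]
  have chiv : ∀ u v x : ℝ, Mid S σ Q ι JJ x u v → (¬ ∃ y, Mid S σ Q ι JJ u v y) →
      chi S σ Q ι JJ u v = Sum.inl (x, u, v) := by
    intro u v x hm hno
    have h2 : ∃ y, Mid S σ Q ι JJ y u v := ⟨x, hm⟩
    have hch := h2.choose_spec
    have hx : h2.choose = x := by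
      by_contra hne
      have hpairne : (h2.choose, v) ≠ (x, v) := fun h => hne (congrArg Prod.fst h)
      exact disj x v h2.choose v u hm.1 hch.1 hpairne (Or.inr (Or.inr (Or.inr rfl)))
        (le_of_lt hm.2.2.1) (le_of_lt hm.2.2.2.1)
        (le_of_lt hch.2.2.1) (le_of_lt hch.2.2.2.1)
    rw [chi, dif_neg hno, dif_pos h2, hx]
  refine ⟨(ℝ × ℝ × ℝ) ⊕ (ℝ × ℝ), chi S σ Q ι JJ, ?_, ?_⟩
  · -- 2-boundedness
    rintro (⟨α, β, γ⟩ | ⟨α, β⟩)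
    · have hsub : {p : ℝ × ℝ | p.1 ∈ S ∧ p.2 ∈ S ∧ p.1 < p.2 ∧
          chi S σ Q ι JJ p.1 p.2 = Sum.inl (α, β, γ)} ⊆ {(α, β), (β, γ)} := by
        intro p hp
        obtain ⟨-, -, -, hχ⟩ := hp
        by_cases h1 : ∃ x, Mid S σ Q ι JJ p.1 p.2 x
        · rw [chi, dif_pos h1] at hχ
          simp only [Sum.inl.injEq, Prod.mk.injEq] at hχ
          exact Set.mem_insert_iff.mpr (Or.inl (Prod.ext hχ.1 hχ.2.1))
        · by_cases h2 : ∃ x, Mid S σ Q ι JJ x p.1 p.2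
          · rw [chi, dif_neg h1, dif_pos h2] at hχ
            simp only [Sum.inl.injEq, Prod.mk.injEq] at hχ
            exact Set.mem_insert_iff.mpr (Or.inr
              (Set.mem_singleton_iff.mpr (Prod.ext hχ.2.1 hχ.2.2)))
          · rw [chi, dif_neg h1, dif_neg h2] at hχ
            simp at hχ
      refine (Set.encard_mono hsub).trans ?_
      refine (Set.encard_insert_le _ _).trans ?_
      rw [Set.encard_singleton]
      norm_num
    · have hsub : {p : ℝ × ℝ | p.1 ∈ S ∧ p.2 ∈ S ∧ p.1 < p.2 ∧
          chi S σ Q ι JJ p.1 p.2 = Sum.inr (α, β)} ⊆ {(α, β)} := by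
        intro p hp
        obtain ⟨-, -, -, hχ⟩ := hp
        by_cases h1 : ∃ x, Mid S σ Q ι JJ p.1 p.2 x
        · rw [chi, dif_pos h1] at hχ
          simp at hχ
        · by_cases h2 : ∃ x, Mid S σ Q ι JJ x p.1 p.2
          · rw [chi, dif_neg h1, dif_pos h2] at hχ
            simp at hχ
          · rw [chi, dif_neg h1, dif_neg h2] at hχ
            simp only [Sum.inr.injEq, Prod.mk.injEq] at hχ
            exact Set.mem_singleton_iff.mpr (Prod.ext hχ.1 hχ.2)
      refine (Set.encard_mono hsub).trans ?_
      rw [Set.encard_singleton]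
      norm_num
  · -- polychromatic implies nowhere dense
    intro A hAS hpoly
    show interior (closure A) = ∅
    rw [← Set.not_nonempty_iff_eq_empty]
    rintro ⟨x, hx⟩
    have hnb : closure A ∈ nhds x := mem_interior_iff_mem_nhds.mp hx
    obtain ⟨ε, hε, hball⟩ := Metric.mem_nhds_iff.mp hnb
    rw [Real.ball_eq_Ioo] at hball
    have hne : ∀ u v : ℝ, x - ε ≤ u → v ≤ x + ε → u < v → (A ∩ Ioo u v).Nonempty := by
      intro u v hu hv huv
      have hmid : (u + v)/2 ∈ closure A :=
        hball ⟨by linarith, by linarith⟩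
      obtain ⟨y, hy1, hy2⟩ := (mem_closure_iff.mp hmid) (Ioo u v) isOpen_Ioo
        ⟨by linarith, by linarith⟩
      exact ⟨y, hy2, hy1⟩
    have hinf : ∀ u v : ℝ, x - ε ≤ u → v ≤ x + ε → u < v → (A ∩ Ioo u v).Infinite := by
      intro u v hu hv huv
      intro hfin
      have hop : IsOpen (Ioo u v \ (A ∩ Ioo u v)) := IsOpen.sdiff isOpen_Ioo hfin.isClosed
      obtain ⟨w, hw⟩ := ((Set.Ioo_infinite huv).diff hfin).nonempty
      have hwcl : w ∈ closure A :=
        hball ⟨lt_of_le_of_lt hu hw.1.1, lt_of_lt_of_le hw.1.2 hv⟩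
      obtain ⟨y, hyO, hyA⟩ := (mem_closure_iff.mp hwcl) _ hop hw
      exact hyO.2 ⟨hyA, hyO.1⟩
    obtain ⟨a, haA, haI⟩ := hne (x - ε) x (le_refl _) (by linarith) (by linarith)
    obtain ⟨c, hcA, hcI⟩ := hne a (x + ε) (le_of_lt haI.1) (le_refl _) (by linarith [haI.2])
    have hacQ : (a, c) ∈ Q := ⟨hAS haA, hAS hcA, hcI.1⟩
    obtain ⟨hb0, hb1, hb2⟩ := hbounds a c hacQ
    have hd : 0 < c - a := sub_pos.mpr hcI.1
    have hja : a < (JJ (ι (a, c))).1 := by linarith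
    have hjc : (JJ (ι (a, c))).2 < c := by linarith
    have hB : {s ∈ S | σ s ≤ max (σ a) (σ c)}.Finite := by
      apply Set.Finite.of_finite_image (f := σ) ?_ (hσ.mono (fun y hy => hy.1))
      apply Set.Finite.subset (Set.finite_Iic (max (σ a) (σ c)))
      rintro k ⟨y, hy, rfl⟩
      exact hy.2
    have hAinf : (A ∩ Ioo (JJ (ι (a, c))).1 (JJ (ι (a, c))).2).Infinite := by
      apply hinf
      · linarith [haI.1]
      · linarith [hcI.2]
      · exact hb0
    obtain ⟨z, hz1, hz2⟩ := (hAinf.diff hB).nonempty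
    have hzA : z ∈ A := hz1.1
    have hzS : z ∈ S := hAS hzA
    have hzσ : max (σ a) (σ c) < σ z := by
      by_contra hle
      exact hz2 ⟨hzS, le_of_not_gt hle⟩
    have hMid : Mid S σ Q ι JJ a z c :=
      ⟨hacQ, hzS, hz1.2.1, hz1.2.2,
        lt_of_le_of_lt (le_max_left _ _) hzσ, lt_of_le_of_lt (le_max_right _ _) hzσ⟩
    have haz : a < z := lt_trans hja hz1.2.1
    have hzc : z < c := lt_trans hz1.2.2 hjc
    have hc1 : chi S σ Q ι JJ a z = Sum.inl (a, z, c) := chiu a z c hMid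
    have hc2 : chi S σ Q ι JJ z c = Sum.inl (a, z, c) := by
      apply chiv z c a hMid
      rintro ⟨y, hy⟩
      exact Nat.lt_asymm hMid.2.2.2.2.2 hy.2.2.2.2.1
    have := hpoly a z z c haA hzA hzA hcA haz hzc (hc1.trans hc2.symm)
    exact absurd this.1 (ne_of_lt haz)
end

section
/- For every function G : ℕ → ℝ there exists an injective function F : ℕ → ℝ such that for every A ⊆ ℕ, if the image F(A) is nowhere dense in ℝ then the image G(A) is nowhere dense in ℝ. -/
private lemma exists_eps (G : ℕ → ℝ) :
    ∃ ε : ℕ → ℝ, ∀ n : ℕ, ε n ∈ Set.Ioo (0:ℝ) (1/(n+1)) ∧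
      ∀ m, m < n → G m + ε m ≠ G n + ε n := by
  have key : ∀ (n : ℕ) (prev : ∀ m, m < n → ℝ),
      ∃ x : ℝ, x ∈ Set.Ioo (0:ℝ) (1/(n+1)) ∧
        ∀ m (h : m < n), G m + prev m h ≠ G n + x := by
    intro n prev
    set B : Finset ℝ := (Finset.range n).attach.image
      (fun m => G m.1 + prev m.1 (Finset.mem_range.mp m.2) - G n) with hB
    have hinf : (Set.Ioo (0:ℝ) (1/(n+1))).Infinite := Set.Ioo_infinite (by positivity)
    obtain ⟨x, hx⟩ := (hinf.diff B.finite_toSet).nonempty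
    refine ⟨x, hx.1, fun m h hc => hx.2 ?_⟩
    have : (G m + prev m h - G n : ℝ) ∈ B := by
      rw [hB]
      exact Finset.mem_image.mpr ⟨⟨m, Finset.mem_range.mpr h⟩, Finset.mem_attach _ _, rfl⟩
    have hx' : x = G m + prev m h - G n := by linarith
    simpa [hx'] using this
  let ε : ℕ → ℝ := WellFounded.fix Nat.lt_wfRel.wf (fun n ih => (key n ih).choose)
  have hfix : ∀ n, ε n = (key n (fun m _ => ε m)).choose := fun n =>
    WellFounded.fix_eq _ _ _
  refine ⟨ε, fun n => ?_⟩
  have h := (key n (fun m _ => ε m)).choose_spec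
  rw [← hfix n] at h
  exact h

/-- For every `G : ℕ → ℝ` there is an injective `F : ℕ → ℝ` such that for every `A ⊆ ℕ`,
if `F '' A` is nowhere dense then so is `G '' A`. -/
theorem injective_nowhereDense_transfer (G : ℕ → ℝ) :
    ∃ F : ℕ → ℝ, Function.Injective F ∧
      ∀ A : Set ℕ, IsNowhereDense (F '' A) → IsNowhereDense (G '' A) := by
  obtain ⟨ε, hε⟩ := exists_eps G
  set F : ℕ → ℝ := fun n => G n + ε n with hF
  have hinj : Function.Injective F := by
    intro a b h
    rcases lt_trichotomy a b with hab | hab | hab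
    · exact absurd h ((hε b).2 a hab)
    · exact hab
    · exact absurd h.symm ((hε a).2 b hab)
  refine ⟨F, hinj, fun A hND => ?_⟩
  unfold IsNowhereDense at hND ⊢
  have hsub : interior (closure (G '' A)) ⊆ closure (F '' A) := by
    intro x hx
    rw [Metric.mem_closure_iff]
    intro δ hδ
    set J := interior (closure (G '' A)) ∩ Metric.ball x (δ/2) with hJ
    have hJopen : IsOpen J := isOpen_interior.inter Metric.isOpen_ball
    have hxJ : x ∈ J := ⟨hx, Metric.mem_ball_self (by linarith)⟩
    -- J is infinite
    have hJinf : J.Infinite := by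
      obtain ⟨r, hr, hball⟩ := Metric.isOpen_iff.mp hJopen x hxJ
      have : Set.Ioo (x - r) (x + r) ⊆ J := by
        rw [← Real.ball_eq_Ioo]; exact hball
      exact (Set.Ioo_infinite (by linarith)).mono this
    -- J ⊆ closure (G '' A ∩ J)
    have hJcl : J ⊆ closure (G '' A ∩ J) := by
      intro y hy
      have hy1 : y ∈ closure (G '' A) := interior_subset hy.1
      have : closure (G '' A) ⊆ closure (G '' A ∩ J) ∪ closure (G '' A \ J) := by
        rw [← closure_union, Set.inter_union_diff]
      rcases this hy1 with h1 | h2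
      · exact h1
      · exfalso
        have : closure (G '' A \ J) ⊆ Jᶜ :=
          closure_minimal (fun z hz => hz.2) hJopen.isClosed_compl
        exact this h2 hy
    have hTinf : (G '' A ∩ J).Infinite := by
      intro hfin
      have := hfin.isClosed.closure_eq
      exact hJinf (hfin.subset (this ▸ hJcl))
    -- the index set is infinite
    have hSinf : {a : ℕ | a ∈ A ∧ G a ∈ J}.Infinite := by
      have himg : G '' A ∩ J ⊆ G '' {a : ℕ | a ∈ A ∧ G a ∈ J} := by
        rintro y ⟨⟨a, haA, rfl⟩, hyJ⟩
        exact ⟨a, ⟨haA, hyJ⟩, rfl⟩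
      exact Set.Infinite.of_image _ (hTinf.mono himg)
    obtain ⟨a, ⟨haA, haJ⟩, haN⟩ := hSinf.exists_gt ⌈2/δ⌉₊
    refine ⟨F a, ⟨a, haA, rfl⟩, ?_⟩
    have h1 : dist x (G a) < δ/2 := by
      have := haJ.2
      rw [Metric.mem_ball] at this
      simpa [dist_comm] using this
    have hε1 : (0:ℝ) < ε a := (hε a).1.1
    have hε2 : ε a < 1/(a+1) := (hε a).1.2
    have hsmall : (1:ℝ)/(a+1) ≤ δ/2 := by
      rw [div_le_div_iff₀ (by positivity) (by norm_num)]
      have h2d : (2/δ : ℝ) ≤ ⌈2/δ⌉₊ := Nat.le_ceil _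
      have : (⌈2/δ⌉₊ : ℝ) < a := by exact_mod_cast haN
      have haa : (2/δ : ℝ) < a := lt_of_le_of_lt h2d this
      rw [div_lt_iff₀ hδ] at haa
      nlinarith
    have : dist x (F a) ≤ dist x (G a) + |ε a| := by
      calc dist x (F a) ≤ dist x (G a) + dist (G a) (F a) := dist_triangle _ _ _
        _ = dist x (G a) + |ε a| := by
            rw [hF]; simp [Real.dist_eq, abs_sub_comm]
    have : dist x (F a) < δ := by
      rw [abs_of_pos hε1] at this
      linarith
    exact this
  have h2 : interior (closure (G '' A)) ⊆ interior (closure (F '' A)) :=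
    interior_maximal hsub isOpen_interior
  rw [hND] at h2
  exact Set.subset_empty_iff.mp h2
end

section
/- Let U be a nonprincipal ultrafilter on ℕ such that for every injective function f : ℕ → ℚ there is A ∈ U with f(A) nowhere dense in ℚ (i.e. U is weakly nowhere dense). Then for every function f : ℕ → ℚ there is A ∈ U with f(A) nowhere dense in ℚ (i.e. U is nowhere dense). -/
/-!
Perturb `f` to an injective `g` with `dist (f n) (g n) → 0` and take `A ∈ U` with `g '' A`
nowhere dense. An accumulation point of `f '' A` is approached by `f n` for infinitely many
distinct `n`, hence by the `g n`, so the derived set of `f '' A` lies in the nowhere dense set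
`closure (g '' A)`. In a space without isolated points this forces `f '' A` to be nowhere dense:
an open set inside `closure (f '' A)` but outside `closure (g '' A)` would consist of points of
`f '' A` that are all accumulation points of `f '' A`.
-/

open Filter Function Set Topology

section InjectiveSeq

variable {α : Type*} {s : ℕ → Set α}

noncomputable def seqAvoidingPrevious (hs : ∀ n, (s n).Infinite) : ℕ → α
  | n => ((hs n).sdiff (finite_range fun m : Fin n => seqAvoidingPrevious hs m)).nonempty.some

theorem seqAvoidingPrevious_mem (hs : ∀ n, (s n).Infinite) (n : ℕ) :
    seqAvoidingPrevious hs n ∈ s n \ range fun m : Fin n => seqAvoidingPrevious hs m := by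
  rw [seqAvoidingPrevious]
  exact Nonempty.some_mem _

theorem exists_injective_forall_mem_of_infinite (hs : ∀ n, (s n).Infinite) :
    ∃ g : ℕ → α, Injective g ∧ ∀ n, g n ∈ s n := by
  have hne {m n : ℕ} (hmn : m < n) : seqAvoidingPrevious hs m ≠ seqAvoidingPrevious hs n :=
    fun h => (seqAvoidingPrevious_mem hs n).2 ⟨⟨m, hmn⟩, h⟩
  refine ⟨seqAvoidingPrevious hs, fun m n hmn => ?_, fun n => (seqAvoidingPrevious_mem hs n).1⟩
  rcases lt_trichotomy m n with h | h | h
  exacts [(hne h hmn).elim, h, (hne h hmn.symm).elim]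

end InjectiveSeq

theorem exists_injective_tendsto_dist_zero {X : Type*} [MetricSpace X] [PerfectSpace X]
    (f : ℕ → X) :
    ∃ g : ℕ → X, Injective g ∧ Tendsto (fun n => dist (f n) (g n)) cofinite (𝓝 0) := by
  have hball (n : ℕ) : (Metric.ball (f n) (1 / (n + 1))).Infinite :=
    infinite_of_mem_nhds _ (Metric.ball_mem_nhds _ (by positivity))
  obtain ⟨g, hg_inj, hg_mem⟩ := exists_injective_forall_mem_of_infinite hball
  refine ⟨g, hg_inj, ?_⟩
  rw [Nat.cofinite_eq_atTop]
  exact squeeze_zero (fun _ => dist_nonneg) (fun n => (Metric.mem_ball'.mp (hg_mem n)).le)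
    tendsto_one_div_add_atTop_nhds_zero_nat

theorem derivedSet_image_subset_closure_image {ι X : Type*} [MetricSpace X] {f g : ι → X}
    (hfg : Tendsto (fun i => dist (f i) (g i)) cofinite (𝓝 0)) (B : Set ι) :
    derivedSet (f '' B) ⊆ closure (g '' B) := by
  intro x hx
  set L := comap f (𝓝[≠] x ⊓ 𝓟 (f '' B)) ⊓ 𝓟 B
  have : L.NeBot :=
    comap_inf_principal_neBot_of_image_mem hx (mem_inf_of_right (mem_principal_self _))
  have hL_le : L ≤ cofinite := by
    intro t ht
    refine mem_inf_of_left (mem_comap.mpr ⟨(f '' tᶜ)ᶜ, ?_, ?_⟩)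
    · exact mem_inf_of_left (nhdsNE_le_cofinite x (ht.image f).compl_mem_cofinite)
    · rw [preimage_compl, compl_subset_comm]
      exact subset_preimage_image f tᶜ
  have hf : Tendsto f L (𝓝 x) :=
    tendsto_iff_comap.mpr (inf_le_left.trans (comap_mono (inf_le_left.trans nhdsWithin_le_nhds)))
  exact mem_closure_of_tendsto (hf.congr_dist (hfg.mono_left hL_le))
    (mem_inf_of_right (subset_preimage_image g B))

theorem IsNowhereDense.of_derivedSet_subset {X : Type*} [TopologicalSpace X] [PerfectSpace X]
    {s t : Set X} (ht : IsNowhereDense t) (hst : derivedSet s ⊆ closure t) : IsNowhereDense s := by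
  set V := interior (closure s)
  set W := V \ closure t
  have hW_open : IsOpen W := isOpen_interior.sdiff isClosed_closure
  have hW_sub : W ⊆ s := fun x ⟨hxV, hxt⟩ => by
    have hxs : x ∈ s ∪ derivedSet s := closure_eq_self_union_derivedSet s ▸ interior_subset hxV
    exact hxs.resolve_right fun hx => hxt (hst hx)
  have hW_empty : W = ∅ := by
    refine eq_empty_of_forall_notMem fun x hx => hx.2 (hst ?_)
    exact derivedSet_mono _ _ hW_sub (preperfect_iff_subset_derivedSet.mp hW_open.preperfect hx)
  have hV_sub : V ⊆ closure t := sdiff_eq_empty.mp hW_empty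
  exact subset_eq_empty (interior_maximal hV_sub isOpen_interior) ht

theorem weakly_nwd_is_nwd_general (U : Ultrafilter ℕ)
    (h : ∀ f : ℕ → ℚ, Function.Injective f → ∃ A ∈ U, IsNowhereDense (f '' A)) :
    ∀ f : ℕ → ℚ, ∃ A ∈ U, IsNowhereDense (f '' A) := by
  intro f
  obtain ⟨g, hg_inj, hfg⟩ := exists_injective_tendsto_dist_zero f
  obtain ⟨A, hA, hgA⟩ := h g hg_inj
  exact ⟨A, hA, hgA.of_derivedSet_subset (derivedSet_image_subset_closure_image hfg A)⟩

/-- Every weakly nowhere dense ultrafilter is nowhere dense. -/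
theorem weakly_nwd_is_nwd (U : Ultrafilter ℕ)
    (hU : ∀ s : Set ℕ, s.Finite → s ∉ U)
    (h : ∀ f : ℕ → ℚ, Function.Injective f → ∃ A ∈ U, IsNowhereDense (f '' A)) :
    ∀ f : ℕ → ℚ, ∃ A ∈ U, IsNowhereDense (f '' A) :=
  weakly_nwd_is_nwd_general U h
end

section
/- Let Par₁ be the least cardinality of a family G of finite-to-one functions f : ℕ → ℕ such that for every infinite X ⊆ ℕ there is f ∈ G which is neither eventually constant on X nor eventually injective on X. Let Hom₁ be the least cardinality of a family 𝒳 of infinite subsets of ℕ such that for every finite-to-one f : ℕ → ℕ there is X ∈ 𝒳 on which f is eventually constant or eventually injective. Then Par₁ equals the bounding number 𝔟 (the least cardinality of a family of functions ℕ → ℕ unbounded under eventual domination ≤*) and Hom₁ equals the dominating number 𝔡 (the least cardinality of a family of functions ℕ → ℕ such that every function ℕ → ℕ is eventually dominated by a member of the family). -/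
open Cardinal

/-- `f` is eventually constant on `X`. -/
def EvConstOn (f : ℕ → ℕ) (X : Set ℕ) : Prop :=
  ∃ N, ∀ m n, m ∈ X → n ∈ X → N ≤ m → N ≤ n → f m = f n

/-- `f` is eventually injective on `X`. -/
def EvInjOn (f : ℕ → ℕ) (X : Set ℕ) : Prop :=
  ∃ N, ∀ m n, m ∈ X → n ∈ X → N ≤ m → N ≤ n → m ≠ n → f m ≠ f n

/-- Eventual domination: `u(n) ≤ v(n)` for all but finitely many `n`. -/
def LeStar (u v : ℕ → ℕ) : Prop := ∃ N, ∀ n, N ≤ n → u n ≤ v n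

/-- `Par₁`: least size of a family `G` of finite-to-one functions such that every infinite
`X ⊆ ℕ` has some `f ∈ G` neither eventually constant nor eventually injective on `X`. -/
noncomputable def par1 : Cardinal :=
  sInf {c : Cardinal | ∃ G : Set (ℕ → ℕ), #G = c ∧
    (∀ f ∈ G, ∀ n : ℕ, (f ⁻¹' {n}).Finite) ∧
    ∀ X : Set ℕ, X.Infinite → ∃ f ∈ G, ¬ EvConstOn f X ∧ ¬ EvInjOn f X}

/-- `Hom₁`: least size of a family `𝒳` of infinite subsets of `ℕ` such that every
finite-to-one `f` is eventually constant or eventually injective on some `X ∈ 𝒳`. -/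
noncomputable def hom1 : Cardinal :=
  sInf {c : Cardinal | ∃ 𝒳 : Set (Set ℕ), #𝒳 = c ∧
    (∀ X ∈ 𝒳, X.Infinite) ∧
    ∀ f : ℕ → ℕ, (∀ n : ℕ, (f ⁻¹' {n}).Finite) →
      ∃ X ∈ 𝒳, EvConstOn f X ∨ EvInjOn f X}

/-- The bounding number `𝔟`. -/
noncomputable def boundingNumber : Cardinal :=
  sInf {c : Cardinal | ∃ F : Set (ℕ → ℕ), #F = c ∧
    ∀ g : ℕ → ℕ, ∃ f ∈ F, ¬ LeStar f g}

/-- The dominating number `𝔡`. -/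
noncomputable def dominatingNumber : Cardinal :=
  sInf {c : Cardinal | ∃ F : Set (ℕ → ℕ), #F = c ∧
    ∀ g : ℕ → ℕ, ∃ f ∈ F, LeStar g f}

section Aux

open Classical in
/-- A strictly increasing majorant of `g`. -/
def maxUp (g : ℕ → ℕ) (n : ℕ) : ℕ := n + 1 + (Finset.range (n+1)).sup g

lemma lt_maxUp (g : ℕ → ℕ) (n : ℕ) : n < maxUp g n := by
  unfold maxUp; omega

lemma le_maxUp (g : ℕ → ℕ) {j n : ℕ} (h : j ≤ n) : g j ≤ maxUp g n := by
  have : g j ≤ (Finset.range (n+1)).sup g :=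
    Finset.le_sup (Finset.mem_range.mpr (by omega))
  unfold maxUp; omega

/-- Iterates of `maxUp g` starting at `0`. -/
def itr (g : ℕ → ℕ) (k : ℕ) : ℕ := (maxUp g)^[k] 0

lemma itr_succ (g : ℕ → ℕ) (k : ℕ) : itr g (k+1) = maxUp g (itr g k) :=
  Function.iterate_succ_apply' _ _ _

lemma itr_strictMono (g : ℕ → ℕ) : StrictMono (itr g) :=
  strictMono_nat_of_lt_succ fun k => by rw [itr_succ]; exact lt_maxUp g _

lemma itr_le (g : ℕ → ℕ) (k : ℕ) : k ≤ itr g k := (itr_strictMono g).le_apply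

/-- The set of iterates. -/
def Xset (g : ℕ → ℕ) : Set ℕ := Set.range (itr g)

lemma Xset_infinite (g : ℕ → ℕ) : (Xset g).Infinite :=
  Set.infinite_range_of_injective (itr_strictMono g).injective

/-- Interval collapse: `fg g m` is the greatest `k` with `itr g k ≤ m`. -/
def fg (g : ℕ → ℕ) (m : ℕ) : ℕ := Nat.findGreatest (fun k => itr g k ≤ m) m

lemma itr_fg_le (g : ℕ → ℕ) (m : ℕ) : itr g (fg g m) ≤ m :=
  Nat.findGreatest_spec (P := fun k => itr g k ≤ m) (Nat.zero_le m)
    (show (maxUp g)^[0] 0 ≤ m by simp)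

lemma le_fg (g : ℕ → ℕ) {k m : ℕ} (h : itr g k ≤ m) : k ≤ fg g m :=
  Nat.le_findGreatest ((itr_le g k).trans h) h

lemma fg_lt (g : ℕ → ℕ) (m : ℕ) : m < itr g (fg g m + 1) := by
  by_contra h
  push_neg at h
  have := le_fg g h
  omega

lemma fg_mono (g : ℕ → ℕ) : Monotone (fg g) :=
  fun m _ h => le_fg g ((itr_fg_le g m).trans h)

lemma fg_finiteToOne (g : ℕ → ℕ) (k : ℕ) : (fg g ⁻¹' {k}).Finite := by
  apply (Set.finite_Iio (itr g (k+1))).subset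
  intro m hm
  simp only [Set.mem_preimage, Set.mem_singleton_iff] at hm
  have := fg_lt g m
  rw [hm] at this
  exact this

lemma not_evConstOn (f : ℕ → ℕ) (hf : ∀ k, (f ⁻¹' {k}).Finite) {X : Set ℕ}
    (hX : X.Infinite) : ¬ EvConstOn f X := by
  rintro ⟨N, hN⟩
  obtain ⟨x₀, hx₀X, hx₀⟩ : ∃ x ∈ X, N ≤ x := by
    by_contra h
    push_neg at h
    exact hX ((Set.finite_Iio N).subset fun x hx => (h x hx))
  apply hX
  apply ((hf (f x₀)).union (Set.finite_Iio N)).subset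
  intro x hx
  by_cases hxN : N ≤ x
  · exact Or.inl (by simp [hN x x₀ hx hx₀X hxN hx₀])
  · exact Or.inr (by simpa using by omega)

/-- For finite-to-one `f`, `hbd f n` bounds where values of `f` on `[0,n]` can recur. -/
noncomputable def hbd (f : ℕ → ℕ) (n : ℕ) : ℕ :=
  sInf {H | ∀ m, H ≤ m → ∀ j ≤ n, f m ≠ f j}

lemma hbd_spec (f : ℕ → ℕ) (hf : ∀ k, (f ⁻¹' {k}).Finite) {n m j : ℕ}
    (hm : hbd f n ≤ m) (hj : j ≤ n) : f m ≠ f j := by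
  have hne : {H | ∀ m, H ≤ m → ∀ j ≤ n, f m ≠ f j}.Nonempty := by
    have hS : (⋃ j ∈ Finset.range (n+1), f ⁻¹' {f j}).Finite :=
      Set.Finite.biUnion (Finset.range (n+1)).finite_toSet (fun j _ => hf (f j))
    obtain ⟨b, hb⟩ := hS.bddAbove
    refine ⟨b+1, fun m hm j hj heq => ?_⟩
    have hmem : m ∈ ⋃ j ∈ Finset.range (n+1), f ⁻¹' {f j} :=
      Set.mem_biUnion (show j ∈ Finset.range (n+1) from Finset.mem_range.mpr (by omega))
        (show m ∈ f ⁻¹' {f j} by simp [heq])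
    have := hb hmem
    omega
  exact Nat.sInf_mem hne m hm j hj

/-- Core lemma 2: if `maxUp g` eventually dominates `hbd f`, then `f` is eventually
injective on the iterate set of `g`. -/
lemma evInjOn_Xset (f g : ℕ → ℕ) (hf : ∀ k, (f ⁻¹' {k}).Finite) (N : ℕ)
    (hdom : ∀ n, N ≤ n → hbd f n ≤ maxUp g n) : EvInjOn f (Xset g) := by
  have key : ∀ i j : ℕ, N ≤ i → i < j → f (itr g j) ≠ f (itr g i) := by
    intro i j hNi hij
    refine hbd_spec f hf (n := itr g i) ?_ le_rfl
    have h1 : itr g (i+1) ≤ itr g j := (itr_strictMono g).monotone hij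
    have h2 : hbd f (itr g i) ≤ maxUp g (itr g i) :=
      hdom _ (hNi.trans (itr_le g i))
    rw [← itr_succ] at h2
    omega
  refine ⟨itr g N, ?_⟩
  rintro m n ⟨i, rfl⟩ ⟨j, rfl⟩ hNm hNn hmn
  have hNi : N ≤ i := (itr_strictMono g).le_iff_le.mp hNm
  have hNj : N ≤ j := (itr_strictMono g).le_iff_le.mp hNn
  have hij : i ≠ j := fun h => hmn (by rw [h])
  rcases hij.lt_or_gt with h | h
  · exact (key i j hNi h).symm
  · exact key j i hNj h

/-- Core lemma 1: if the interval collapse `fg g` is eventually injective on an infinite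
set `X`, then `g` is eventually dominated by the doubled enumeration of `X`. -/
lemma leStar_of_evInjOn (g : ℕ → ℕ) {X : Set ℕ} (hX : X.Infinite)
    (h : EvInjOn (fg g) X) : LeStar g (fun n => Nat.nth (· ∈ X) (2*n)) := by
  obtain ⟨N, hN⟩ := h
  set e : ℕ → ℕ := Nat.nth (· ∈ X) with he
  have hXs : {n | n ∈ X}.Infinite := hX
  have he_mono : StrictMono e := Nat.nth_strictMono hXs
  have he_mem : ∀ n, e n ∈ X := fun n => Nat.nth_mem_of_infinite hXs n
  have he_ge : ∀ n, n ≤ e n := fun n => he_mono.le_apply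
  have step : ∀ n, N ≤ n → n - N ≤ fg g (e n) := by
    intro n
    induction n with
    | zero => intro _; omega
    | succ n ih =>
      intro hN1
      rcases Nat.lt_or_ge n N with hc | hc
      · omega
      · have h1 := ih hc
        have hlt : fg g (e n) < fg g (e (n+1)) := by
          have hle : fg g (e n) ≤ fg g (e (n+1)) :=
            fg_mono g (he_mono (by omega)).le
          have hne : fg g (e (n+1)) ≠ fg g (e n) :=
            hN (e (n+1)) (e n) (he_mem _) (he_mem _)
              ((hc.trans (he_ge n)).trans (he_mono (by omega)).le)
              (hc.trans (he_ge n))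
              (fun hh => absurd (he_mono.injective hh) (by omega))
          omega
        omega
  refine ⟨N + 1, fun n hn => ?_⟩
  have h1 : 2*n - N ≤ fg g (e (2*n)) := step (2*n) (by omega)
  have h2 : itr g (2*n - N) ≤ itr g (fg g (e (2*n))) := (itr_strictMono g).monotone h1
  have h3 : itr g (fg g (e (2*n))) ≤ e (2*n) := itr_fg_le g _
  have h4 : g n ≤ itr g (2*n - N) := by
    have hk : 2*n - N = (2*n - N - 1) + 1 := by omega
    rw [hk, itr_succ]
    refine le_maxUp g ?_
    have := itr_le g (2*n - N - 1)
    omega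
  simp only []
  omega

/-- For every infinite `X` there is a finite-to-one function not eventually injective
on `X`. -/
lemma exists_bad (X : Set ℕ) (hX : X.Infinite) :
    ∃ f : ℕ → ℕ, (∀ k, (f ⁻¹' {k}).Finite) ∧ ¬ EvInjOn f X := by
  classical
  have hXs : {n | n ∈ X}.Infinite := hX
  set e : ℕ → ℕ := Nat.nth (· ∈ X) with he
  have he_mono : StrictMono e := Nat.nth_strictMono hXs
  have he_mem : ∀ n, e n ∈ X := fun n => Nat.nth_mem_of_infinite hXs n
  have he_ge : ∀ n, n ≤ e n := fun n => he_mono.le_apply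
  have hcount : ∀ n, Nat.count (· ∈ X) (e n) = n := fun n =>
    Nat.count_nth_of_infinite hXs n
  refine ⟨fun m => Nat.count (· ∈ X) m / 2, ?_, ?_⟩
  · intro k
    apply (Set.finite_Iic (e (2*k+1))).subset
    intro m hm
    simp only [Set.mem_preimage, Set.mem_singleton_iff] at hm
    simp only [Set.mem_Iic]
    by_contra hc
    push_neg at hc
    have h1 : Nat.count (· ∈ X) (e (2*k+1) + 1) ≤ Nat.count (· ∈ X) m :=
      Nat.count_monotone _ (by omega)
    have h2 : Nat.count (· ∈ X) (e (2*k+1) + 1) = 2*k+2 := by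
      rw [Nat.count_succ, hcount, if_pos (he_mem _)]
    omega
  · rintro ⟨N, hN⟩
    have h1 : N ≤ e (2*N) := le_trans (by omega) (he_ge (2*N))
    have h2 : N ≤ e (2*N+1) := le_trans h1 (he_mono (by omega)).le
    refine hN (e (2*N)) (e (2*N+1)) (he_mem _) (he_mem _) h1 h2
      (fun hh => absurd (he_mono.injective hh) (by omega)) ?_
    show Nat.count (· ∈ X) (e (2*N)) / 2 = Nat.count (· ∈ X) (e (2*N+1)) / 2
    rw [hcount, hcount]
    omega

end Aux

/-- `Par₁ = 𝔟` and `Hom₁ = 𝔡`. -/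
theorem par1_eq_bounding_hom1_eq_dominating :
    par1 = boundingNumber ∧ hom1 = dominatingNumber := by
  have hSb_ne : {c : Cardinal | ∃ F : Set (ℕ → ℕ), #F = c ∧
      ∀ g : ℕ → ℕ, ∃ f ∈ F, ¬ LeStar f g}.Nonempty := by
    refine ⟨_, Set.univ, rfl, fun g => ⟨fun n => g n + 1, Set.mem_univ _, ?_⟩⟩
    rintro ⟨N, hN⟩
    have : g N + 1 ≤ g N := hN N le_rfl
    omega
  have hSd_ne : {c : Cardinal | ∃ F : Set (ℕ → ℕ), #F = c ∧
      ∀ g : ℕ → ℕ, ∃ f ∈ F, LeStar g f}.Nonempty :=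
    ⟨_, Set.univ, rfl, fun g => ⟨g, Set.mem_univ _, 0, fun n _ => le_rfl⟩⟩
  have hSpar_ne : {c : Cardinal | ∃ G : Set (ℕ → ℕ), #G = c ∧
      (∀ f ∈ G, ∀ n : ℕ, (f ⁻¹' {n}).Finite) ∧
      ∀ X : Set ℕ, X.Infinite → ∃ f ∈ G, ¬ EvConstOn f X ∧ ¬ EvInjOn f X}.Nonempty := by
    refine ⟨_, {f | ∀ k, (f ⁻¹' {k}).Finite}, rfl, fun f hf => hf, fun X hX => ?_⟩
    obtain ⟨f, hffin, hfnInj⟩ := exists_bad X hX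
    exact ⟨f, hffin, not_evConstOn f hffin hX, hfnInj⟩
  have hShom_ne : {c : Cardinal | ∃ 𝒳 : Set (Set ℕ), #𝒳 = c ∧
      (∀ X ∈ 𝒳, X.Infinite) ∧
      ∀ f : ℕ → ℕ, (∀ n : ℕ, (f ⁻¹' {n}).Finite) →
        ∃ X ∈ 𝒳, EvConstOn f X ∨ EvInjOn f X}.Nonempty := by
    refine ⟨_, {X | X.Infinite}, rfl, fun X hX => hX, fun f hf => ?_⟩
    refine ⟨Xset (hbd f), Xset_infinite _, Or.inr ?_⟩
    exact evInjOn_Xset f (hbd f) hf 0 (fun n _ => le_maxUp (hbd f) le_rfl)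
  constructor
  · apply le_antisymm
    · -- par1 ≤ 𝔟
      refine le_csInf hSb_ne ?_
      rintro c ⟨F, hFc, hFunb⟩
      refine le_trans (csInf_le' ⟨fg '' F, rfl, ?_, ?_⟩)
        (le_trans Cardinal.mk_image_le hFc.le)
      · rintro _ ⟨g, _, rfl⟩ k
        exact fg_finiteToOne g k
      · intro X hX
        obtain ⟨g, hgF, hgn⟩ := hFunb (fun n => Nat.nth (· ∈ X) (2*n))
        exact ⟨fg g, Set.mem_image_of_mem _ hgF,
          not_evConstOn _ (fg_finiteToOne g) hX,
          fun h => hgn (leStar_of_evInjOn g hX h)⟩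
    · -- 𝔟 ≤ par1
      refine le_csInf hSpar_ne ?_
      rintro c ⟨G, hGc, hGfin, hGwit⟩
      refine le_trans (csInf_le' ⟨hbd '' G, rfl, ?_⟩)
        (le_trans Cardinal.mk_image_le hGc.le)
      intro u
      obtain ⟨f₀, hf₀G, _, hnInj⟩ := hGwit (Xset u) (Xset_infinite u)
      refine ⟨hbd f₀, Set.mem_image_of_mem _ hf₀G, ?_⟩
      rintro ⟨N, hLe⟩
      exact hnInj (evInjOn_Xset f₀ u (hGfin f₀ hf₀G) N
        (fun n hn => (hLe n hn).trans (le_maxUp u le_rfl)))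
  · apply le_antisymm
    · -- hom1 ≤ 𝔡
      refine le_csInf hSd_ne ?_
      rintro c ⟨F, hFc, hFdom⟩
      refine le_trans (csInf_le' ⟨Xset '' F, rfl, ?_, ?_⟩)
        (le_trans Cardinal.mk_image_le hFc.le)
      · rintro _ ⟨g, _, rfl⟩
        exact Xset_infinite g
      · intro f hf
        obtain ⟨g, hgF, N, hN⟩ := hFdom (hbd f)
        exact ⟨Xset g, Set.mem_image_of_mem _ hgF, Or.inr
          (evInjOn_Xset f g hf N (fun n hn => (hN n hn).trans (le_maxUp g le_rfl)))⟩
    · -- 𝔡 ≤ hom1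
      refine le_csInf hShom_ne ?_
      rintro c ⟨𝒳, h𝒳c, h𝒳inf, h𝒳wit⟩
      refine le_trans (csInf_le' ⟨(fun X => fun n => Nat.nth (· ∈ X) (2*n)) '' 𝒳, rfl, ?_⟩)
        (le_trans Cardinal.mk_image_le h𝒳c.le)
      intro g
      obtain ⟨X, hX𝒳, hcase⟩ := h𝒳wit (fg g) (fg_finiteToOne g)
      have hXinf := h𝒳inf X hX𝒳
      rcases hcase with hc | hi
      · exact absurd hc (not_evConstOn _ (fg_finiteToOne g) hXinf)
      · exact ⟨_, Set.mem_image_of_mem _ hX𝒳, leStar_of_evInjOn g hXinf hi⟩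
end
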